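/- arXiv:1302.4192 — 12 statements merged into one kernel-verified Lean document; each statement's English description precedes it below -/
import Mathlib

section
/- If X is a T1 regular topological space with a σ-hereditarily closure-preserving π-base, then X is π-metrizable (i.e., has a σ-discrete π-base). -/
open Set Topology

/-- A π-base: a collection of nonempty open sets such that every nonempty open
set contains a member. -/
def IsPiBase (X : Type*) [TopologicalSpace X] (pb : Set (Set X)) : Prop :=
  (∀ P ∈ pb, IsOpen P ∧ P.Nonempty) ∧
  ∀ O : Set X, IsOpen O → O.Nonempty → ∃ P ∈ pb, P ⊆ O

/-- A discrete family of sets: every point has a neighborhood meeting at most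
one member of the family. -/
def IsDiscreteFam (X : Type*) [TopologicalSpace X] (pb : Set (Set X)) : Prop :=
  ∀ x : X, ∃ U ∈ nhds x, {P ∈ pb | (P ∩ U).Nonempty}.Subsingleton

/-- A locally finite family of sets. -/
def IsLocFinFam (X : Type*) [TopologicalSpace X] (pb : Set (Set X)) : Prop :=
  ∀ x : X, ∃ U ∈ nhds x, {P ∈ pb | (P ∩ U).Nonempty}.Finite

/-- Hereditarily closure-preserving: whenever S(P) ⊆ P is chosen for each P in
the family, the family {S(P)} is closure-preserving. -/
def IsHCP (X : Type*) [TopologicalSpace X] (pb : Set (Set X)) : Prop :=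
  ∀ S : Set X → Set X, (∀ P, S P ⊆ P) →
    ∀ qb ⊆ pb, closure (⋃ P ∈ qb, S P) = ⋃ P ∈ qb, closure (S P)

/-- π-metrizable: has a σ-discrete π-base. -/
def PiMetrizable (X : Type*) [TopologicalSpace X] : Prop :=
  ∃ pb : ℕ → Set (Set X), IsPiBase X (⋃ n, pb n) ∧ ∀ n, IsDiscreteFam X (pb n)

/-- Quasi-open map: images of nonempty open sets have nonempty interior. -/
def QuasiOpenMap {X Y : Type*} [TopologicalSpace X] [TopologicalSpace Y]
    (f : X → Y) : Prop :=
  ∀ U : Set X, IsOpen U → U.Nonempty → (interior (f '' U)).Nonempty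

/-- A strong π-base at a point x: a family of nonempty open sets which is a
π-base at x and such that every open neighborhood of x contains all but
finitely many members of the family. -/
def StrongPiBaseAt {X : Type*} [TopologicalSpace X] (pb : Set (Set X)) (x : X) : Prop :=
  (∀ P ∈ pb, IsOpen P ∧ P.Nonempty) ∧
  (∀ U : Set X, IsOpen U → x ∈ U → ∃ P ∈ pb, P ⊆ U) ∧
  (∀ U : Set X, IsOpen U → x ∈ U → {P ∈ pb | ¬ P ⊆ U}.Finite)

/-- Strongly π-metrizable: has a σ-discrete strong π-base. -/
def StronglyPiMetrizable (X : Type*) [TopologicalSpace X] : Prop :=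
  ∃ pb : X → Set (Set X), (∀ x, StrongPiBaseAt (pb x) x) ∧
    ∃ Q : ℕ → Set (Set X), (⋃ x, pb x) = ⋃ n, Q n ∧ ∀ n, IsDiscreteFam X (Q n)

section AuxHCP

variable {X : Type*} [TopologicalSpace X]

lemma hcp_closed_biUnion_closure {pb : Set (Set X)} (hH : IsHCP X pb)
    {S : Set X → Set X} (hS : ∀ P, S P ⊆ P) {qb : Set (Set X)} (hqb : qb ⊆ pb) :
    IsClosed (⋃ P ∈ qb, closure (S P)) := by
  rw [← hH S hS qb hqb]; exact isClosed_closure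

lemma hcp_sel_closed [T1Space X] {pb : Set (Set X)} (hH : IsHCP X pb)
    {S : Set X → Set X} (hS : ∀ P, S P ⊆ P) (hsub : ∀ P, (S P).Subsingleton)
    {qb : Set (Set X)} (hqb : qb ⊆ pb) :
    IsClosed (⋃ P ∈ qb, S P) := by
  have h1 := hH S hS qb hqb
  have h2 : (⋃ P ∈ qb, closure (S P)) = ⋃ P ∈ qb, S P :=
    Set.iUnion₂_congr fun P _ => (hsub P).isClosed.closure_eq
  rw [h2] at h1
  rw [← h1]
  exact isClosed_closure

lemma reg_aux [RegularSpace X] {U : Set X} {x : X} (hU : IsOpen U) (hx : x ∈ U) :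
    ∃ V : Set X, IsOpen V ∧ x ∈ V ∧ closure V ⊆ U := by
  obtain ⟨t, ht, htc, hts⟩ := exists_mem_nhds_isClosed_subset (hU.mem_nhds hx)
  refine ⟨interior t, isOpen_interior, mem_interior_iff_mem_nhds.2 ht, ?_⟩
  calc closure (interior t) ⊆ closure t := closure_mono interior_subset
    _ = t := htc.closure_eq
    _ ⊆ U := hts

lemma discrete_singletons [T1Space X] {D : Set X} (hT : ∀ T ⊆ D, IsClosed T) :
    IsDiscreteFam X ((fun x => ({x} : Set X)) '' D) := by
  intro x
  by_cases hx : x ∈ D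
  · refine ⟨(D \ {x})ᶜ, ((hT _ diff_subset).isOpen_compl).mem_nhds (by simp), ?_⟩
    have hkey : ∀ R ∈ (fun x => ({x} : Set X)) '' D,
        (R ∩ (D \ {x})ᶜ).Nonempty → R = {x} := by
      rintro R ⟨d, hd, rfl⟩ ⟨z, hz1, hz2⟩
      rcases hz1 with rfl
      have : z = x := by
        by_contra hne
        exact hz2 ⟨hd, hne⟩
      rw [this]
    intro R hR R' hR'
    rw [hkey R hR.1 hR.2, hkey R' hR'.1 hR'.2]
  · refine ⟨Dᶜ, ((hT D Set.Subset.rfl).isOpen_compl).mem_nhds hx, ?_⟩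
    rintro R ⟨⟨d, hd, rfl⟩, z, hz1, hz2⟩
    rcases hz1 with rfl
    exact absurd hd hz2

lemma key_hcp_discrete {X : Type*} [TopologicalSpace X] [T1Space X] [RegularSpace X]
    [Nonempty X] {pb : Set (Set X)}
    (h1 : ∀ P ∈ pb, IsOpen P ∧ P.Nonempty) (hH : IsHCP X pb) :
    ∃ q1 q2 : Set (Set X), IsDiscreteFam X q1 ∧ IsDiscreteFam X q2 ∧
      (∀ R ∈ q1, IsOpen R ∧ R.Nonempty) ∧ (∀ R ∈ q2, IsOpen R ∧ R.Nonempty) ∧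
      (∀ P ∈ pb, ∃ R, (R ∈ q1 ∨ R ∈ q2) ∧ R ⊆ P) := by
  classical
  set pbA : Set (Set X) := {P ∈ pb | ∃ x ∈ P, IsOpen ({x} : Set X)} with hpbA
  set pbB : Set (Set X) := {P ∈ pb | ¬ ∃ x ∈ P, IsOpen ({x} : Set X)} with hpbB
  -- Part A : members containing an isolated point
  set xA : Set X → X := fun P =>
    if h : ∃ x ∈ P, IsOpen ({x} : Set X) then h.choose else Classical.arbitrary X with hxAdef
  have hxA : ∀ P ∈ pbA, xA P ∈ P ∧ IsOpen ({xA P} : Set X) := by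
    intro P hP
    obtain ⟨-, h⟩ := hP
    simp only [hxAdef, dif_pos h]
    exact ⟨h.choose_spec.1, h.choose_spec.2⟩
  set DA := xA '' pbA with hDAdef
  have hDAclosed : ∀ T ⊆ DA, IsClosed T := by
    intro T hT
    have hTeq : T = ⋃ P ∈ pbA, ({xA P} ∩ T ∩ P) := by
      ext y
      simp only [Set.mem_iUnion]
      constructor
      · intro hy
        obtain ⟨P, hP, rfl⟩ := hT hy
        exact ⟨P, hP, ⟨rfl, hy⟩, (hxA P hP).1⟩
      · rintro ⟨P, hP, hy⟩
        exact hy.1.2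
    rw [hTeq]
    exact hcp_sel_closed hH (fun P => Set.inter_subset_right)
      (fun P => Set.subsingleton_singleton.anti
        (Set.inter_subset_left.trans Set.inter_subset_left))
      (fun P hP => hP.1)
  -- Part B : members with no isolated point; Zorn to get an injective selection
  set 𝒮 : Set (Set (Set X × X)) := {F | (∀ p ∈ F, p.1 ∈ pbB ∧ p.2 ∈ p.1) ∧
    (∀ p ∈ F, ∀ q ∈ F, p.1 = q.1 → p.2 = q.2) ∧
    (∀ p ∈ F, ∀ q ∈ F, p.2 = q.2 → p.1 = q.1)} with h𝒮
  have hzorn : ∃ F, Maximal (· ∈ 𝒮) F := by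
    apply zorn_subset
    intro c hc hchain
    refine ⟨⋃₀ c, ⟨?_, ?_, ?_⟩, fun s hs => Set.subset_sUnion_of_mem hs⟩
    · rintro p ⟨s, hs, hp⟩
      exact (hc hs).1 p hp
    · rintro p ⟨s, hs, hp⟩ q ⟨t, ht, hq⟩ hpq
      rcases hchain.total hs ht with hst | hts
      · exact (hc ht).2.1 p (hst hp) q hq hpq
      · exact (hc hs).2.1 p hp q (hts hq) hpq
    · rintro p ⟨s, hs, hp⟩ q ⟨t, ht, hq⟩ hpq
      rcases hchain.total hs ht with hst | hts
      · exact (hc ht).2.2 p (hst hp) q hq hpq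
      · exact (hc hs).2.2 p hp q (hts hq) hpq
  obtain ⟨F, hFmax⟩ := hzorn
  have hFmem : F ∈ 𝒮 := hFmax.1
  have htotal : ∀ P ∈ pbB, ∃ y, (P, y) ∈ F := by
    intro P hP
    by_contra hnone
    push_neg at hnone
    set R : Set X := {y | ∃ Q, (Q, y) ∈ F} with hRdef
    have hRsub : ∀ T ⊆ R, IsClosed T := by
      intro T hT
      have hTeq : T = ⋃ Q ∈ pbB, {y | y ∈ T ∧ (Q, y) ∈ F} := by
        ext y
        simp only [Set.mem_iUnion, Set.mem_setOf_eq]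
        constructor
        · intro hy
          obtain ⟨Q, hQ⟩ := hT hy
          exact ⟨Q, (hFmem.1 (Q, y) hQ).1, hy, hQ⟩
        · rintro ⟨Q, _, hy, _⟩
          exact hy
      rw [hTeq]
      refine hcp_sel_closed hH ?_ ?_ (fun Q hQ => hQ.1)
      · intro Q y hy
        exact (hFmem.1 (Q, y) hy.2).2
      · intro Q y hy z hz
        exact hFmem.2.1 (Q, y) hy.2 (Q, z) hz.2 rfl
    have hex : ∃ x ∈ P, x ∉ R := by
      by_contra hall
      push_neg at hall
      obtain ⟨y0, hy0⟩ := (h1 P hP.1).2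
      have hcl : IsClosed (P \ {y0}) := hRsub _ (fun z hz => hall z hz.1)
      have hsingle : ({y0} : Set X) = P ∩ (P \ {y0})ᶜ := by
        ext z
        constructor
        · rintro rfl
          exact ⟨hy0, fun hz => hz.2 rfl⟩
        · rintro ⟨hzP, hz⟩
          by_contra hne
          exact hz ⟨hzP, fun h => hne h⟩
      have hop : IsOpen ({y0} : Set X) := by
        rw [hsingle]
        exact (h1 P hP.1).1.inter hcl.isOpen_compl
      exact hP.2 ⟨y0, hy0, hop⟩
    obtain ⟨x, hxP, hxR⟩ := hex
    have hins : insert (P, x) F ∈ 𝒮 := by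
      refine ⟨?_, ?_, ?_⟩
      · rintro p (rfl | hp)
        · exact ⟨hP, hxP⟩
        · exact hFmem.1 p hp
      · rintro p (rfl | hp) q (rfl | hq) hpq
        · rfl
        · exfalso
          apply hnone q.2
          have heq : ((P, q.2) : Set X × X) = q := Prod.ext hpq rfl
          rw [heq]
          exact hq
        · exfalso
          apply hnone p.2
          have heq : ((P, p.2) : Set X × X) = p := Prod.ext hpq.symm rfl
          rw [heq]
          exact hp
        · exact hFmem.2.1 p hp q hq hpq
      · rintro p (rfl | hp) q (rfl | hq) hpq
        · rfl
        · exfalso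
          apply hxR
          refine ⟨q.1, ?_⟩
          have heq : ((q.1, x) : Set X × X) = q := Prod.ext rfl hpq
          rw [heq]
          exact hq
        · exfalso
          apply hxR
          refine ⟨p.1, ?_⟩
          have heq : ((p.1, x) : Set X × X) = p := Prod.ext rfl hpq.symm
          rw [heq]
          exact hp
        · exact hFmem.2.2 p hp q hq hpq
    have hsub : F ⊆ insert (P, x) F := Set.subset_insert _ _
    have := hFmax.2 hins hsub (Set.mem_insert _ _)
    exact hnone x this
  set xB : Set X → X := fun P =>
    if h : ∃ y, (P, y) ∈ F then h.choose else Classical.arbitrary X with hxBdef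
  have hxBF : ∀ P ∈ pbB, (P, xB P) ∈ F := by
    intro P hP
    have h := htotal P hP
    simp only [hxBdef, dif_pos h]
    exact h.choose_spec
  have hxBmem : ∀ P ∈ pbB, xB P ∈ P := fun P hP => (hFmem.1 _ (hxBF P hP)).2
  have hxBinj : ∀ P ∈ pbB, ∀ Q ∈ pbB, xB P = xB Q → P = Q := by
    intro P hP Q hQ h
    exact hFmem.2.2 (P, xB P) (hxBF P hP) (Q, xB Q) (hxBF Q hQ) h
  set D := xB '' pbB with hDdef
  have hDclosed : ∀ T ⊆ D, IsClosed T := by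
    intro T hT
    have hTeq : T = ⋃ Q ∈ pbB, ({xB Q} ∩ T ∩ Q) := by
      ext y
      simp only [Set.mem_iUnion]
      constructor
      · intro hy
        obtain ⟨Q, hQ, rfl⟩ := hT hy
        exact ⟨Q, hQ, ⟨rfl, hy⟩, hxBmem Q hQ⟩
      · rintro ⟨Q, hQ, hy⟩
        exact hy.1.2
    rw [hTeq]
    exact hcp_sel_closed hH (fun Q => Set.inter_subset_right)
      (fun Q => Set.subsingleton_singleton.anti
        (Set.inter_subset_left.trans Set.inter_subset_left))
      (fun Q hQ => hQ.1)
  set W : Set X → Set X := fun Q => Q ∩ (D \ {xB Q})ᶜ with hWdef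
  have hWsub : ∀ Q, W Q ⊆ Q := fun Q => Set.inter_subset_left
  have hWopen : ∀ Q ∈ pbB, IsOpen (W Q) :=
    fun Q hQ => (h1 Q hQ.1).1.inter (hDclosed _ Set.diff_subset).isOpen_compl
  have hWx : ∀ Q ∈ pbB, xB Q ∈ W Q :=
    fun Q hQ => ⟨hxBmem Q hQ, fun h => h.2 rfl⟩
  have hWD : ∀ Q ∈ pbB, ∀ z ∈ W Q, z ∈ D → z = xB Q := by
    intro Q hQ z hz hzD
    by_contra h
    exact hz.2 ⟨hzD, h⟩
  have hW'ex : ∀ Q, ∃ V : Set X, V ⊆ Q ∧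
      (Q ∈ pbB → IsOpen V ∧ xB Q ∈ V ∧ closure V ⊆ W Q) := by
    intro Q
    by_cases hQ : Q ∈ pbB
    · obtain ⟨V, hVo, hVx, hVc⟩ := reg_aux (hWopen Q hQ) (hWx Q hQ)
      exact ⟨V, (subset_closure.trans hVc).trans (hWsub Q), fun _ => ⟨hVo, hVx, hVc⟩⟩
    · exact ⟨∅, Set.empty_subset _, fun h => absurd h hQ⟩
  choose W' hW'sub hW'spec using hW'ex
  set G : Set X → Set X := fun P => W' P \ ⋃ Q ∈ pbB \ {P}, closure (W' Q) with hGdef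
  have hGsub : ∀ P, G P ⊆ W' P := fun P => Set.diff_subset
  have hGopen : ∀ P ∈ pbB, IsOpen (G P) :=
    fun P hP => ((hW'spec P hP).1).sdiff
      (hcp_closed_biUnion_closure hH hW'sub (fun Q hQ => hQ.1.1))
  have hGx : ∀ P ∈ pbB, xB P ∈ G P := by
    intro P hP
    refine ⟨(hW'spec P hP).2.1, ?_⟩
    intro hmem
    rw [Set.mem_iUnion₂] at hmem
    obtain ⟨Q, hQ, hxcl⟩ := hmem
    have h1' : xB P ∈ W Q := (hW'spec Q hQ.1).2.2 hxcl
    have h2' : xB P = xB Q := hWD Q hQ.1 _ h1' ⟨P, hP, rfl⟩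
    exact hQ.2 (Set.mem_singleton_iff.2 (hxBinj P hP Q hQ.1 h2').symm)
  have hHex : ∀ P, ∃ V : Set X, V ⊆ P ∧
      (P ∈ pbB → IsOpen V ∧ xB P ∈ V ∧ closure V ⊆ G P) := by
    intro P
    by_cases hP : P ∈ pbB
    · obtain ⟨V, hVo, hVx, hVc⟩ := reg_aux (hGopen P hP) (hGx P hP)
      refine ⟨V, ?_, fun _ => ⟨hVo, hVx, hVc⟩⟩
      exact ((subset_closure.trans hVc).trans (hGsub P)).trans (hW'sub P)
    · exact ⟨∅, Set.empty_subset _, fun h => absurd h hP⟩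
  choose Hf hHsub hHspec using hHex
  have hHcl : ∀ Q ∈ pbB, Hf Q ⊆ closure (W' Q) :=
    fun Q hQ => (subset_closure.trans (hHspec Q hQ).2.2).trans
      ((hGsub Q).trans subset_closure)
  have hdisj : ∀ P ∈ pbB, ∀ Q ∈ pbB, P ≠ Q →
      ∀ z, z ∈ closure (Hf P) → z ∉ closure (Hf Q) := by
    intro P hP Q hQ hne z hzP hzQ
    have h1' : z ∈ G P := (hHspec P hP).2.2 hzP
    have h2' : z ∈ closure (W' Q) := by
      have hsub : Hf Q ⊆ W' Q :=
        (subset_closure.trans (hHspec Q hQ).2.2).trans (hGsub Q)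
      exact closure_mono hsub hzQ
    exact h1'.2 (Set.mem_biUnion
      ⟨hQ, fun h => hne (Set.mem_singleton_iff.1 h).symm⟩ h2')
  have hq2disc : IsDiscreteFam X (Hf '' pbB) := by
    intro x
    by_cases hx : ∃ P ∈ pbB, x ∈ closure (Hf P)
    · obtain ⟨P0, hP0, hxP0⟩ := hx
      refine ⟨(⋃ Q ∈ pbB \ {P0}, closure (Hf Q))ᶜ, ?_, ?_⟩
      · refine ((hcp_closed_biUnion_closure hH hHsub
          (fun Q hQ => hQ.1.1)).isOpen_compl).mem_nhds ?_
        intro hmem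
        rw [Set.mem_iUnion₂] at hmem
        obtain ⟨Q, hQ, hxQ⟩ := hmem
        exact hdisj P0 hP0 Q hQ.1
          (fun h => hQ.2 (Set.mem_singleton_iff.2 h.symm)) x hxP0 hxQ
      · have hkey : ∀ R ∈ Hf '' pbB,
            (R ∩ (⋃ Q ∈ pbB \ {P0}, closure (Hf Q))ᶜ).Nonempty → R = Hf P0 := by
          rintro R ⟨Q, hQ, rfl⟩ ⟨z, hz1, hz2⟩
          by_cases h : Q = P0
          · rw [h]
          · exfalso
            apply hz2
            exact Set.mem_biUnion ⟨hQ, fun hh => h (Set.mem_singleton_iff.1 hh)⟩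
              (subset_closure hz1)
        intro R hR R' hR'
        rw [hkey R hR.1 hR.2, hkey R' hR'.1 hR'.2]
    · push_neg at hx
      refine ⟨(⋃ Q ∈ pbB, closure (Hf Q))ᶜ, ?_, ?_⟩
      · refine ((hcp_closed_biUnion_closure hH hHsub
          (fun Q hQ => hQ.1)).isOpen_compl).mem_nhds ?_
        intro hmem
        rw [Set.mem_iUnion₂] at hmem
        obtain ⟨Q, hQ, hxQ⟩ := hmem
        exact hx Q hQ hxQ
      · rintro R ⟨⟨Q, hQ, rfl⟩, z, hz1, hz2⟩
        exfalso
        apply hz2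
        exact Set.mem_biUnion hQ (subset_closure hz1)
  refine ⟨(fun x => ({x} : Set X)) '' DA, Hf '' pbB,
    discrete_singletons hDAclosed, hq2disc, ?_, ?_, ?_⟩
  · rintro R ⟨d, ⟨P, hP, rfl⟩, rfl⟩
    exact ⟨(hxA P hP).2, Set.singleton_nonempty _⟩
  · rintro R ⟨P, hP, rfl⟩
    exact ⟨(hHspec P hP).1, ⟨xB P, (hHspec P hP).2.1⟩⟩
  · intro P hP
    by_cases h : ∃ x ∈ P, IsOpen ({x} : Set X)
    · have hPA : P ∈ pbA := ⟨hP, h⟩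
      exact ⟨{xA P}, Or.inl ⟨xA P, ⟨P, hPA, rfl⟩, rfl⟩,
        Set.singleton_subset_iff.2 (hxA P hPA).1⟩
    · have hPB : P ∈ pbB := ⟨hP, h⟩
      exact ⟨Hf P, Or.inr ⟨P, hPB, rfl⟩, hHsub P⟩

end AuxHCP

theorem stmt0 {X : Type*} [TopologicalSpace X] [T1Space X] [RegularSpace X]
    (pb : ℕ → Set (Set X)) (hbase : IsPiBase X (⋃ n, pb n))
    (hHCP : ∀ n, IsHCP X (pb n)) : PiMetrizable X := by
  classical
  cases isEmpty_or_nonempty X with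
  | inl h =>
    refine ⟨fun _ => (∅ : Set (Set X)), ⟨?_, ?_⟩, ?_⟩
    · intro P hP
      rw [Set.mem_iUnion] at hP
      obtain ⟨n, hn⟩ := hP
      exact absurd hn (Set.notMem_empty _)
    · intro O _ hOne
      obtain ⟨x, _⟩ := hOne
      exact (h.false x).elim
    · intro n x
      exact (h.false x).elim
  | inr hne =>
    have hmem : ∀ n, ∀ P ∈ pb n, IsOpen P ∧ P.Nonempty :=
      fun n P hP => hbase.1 P (Set.mem_iUnion.2 ⟨n, hP⟩)
    have hkey := fun n => key_hcp_discrete (hmem n) (hHCP n)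
    choose q1 q2 hd1 hd2 ho1 ho2 hcov using hkey
    refine ⟨fun n => if Even n then q1 (n / 2) else q2 (n / 2), ⟨?_, ?_⟩, ?_⟩
    · intro R hR
      rw [Set.mem_iUnion] at hR
      obtain ⟨n, hn⟩ := hR
      by_cases he : Even n
      · rw [if_pos he] at hn
        exact ho1 _ _ hn
      · rw [if_neg he] at hn
        exact ho2 _ _ hn
    · intro O hO hOne
      obtain ⟨P, hP, hPO⟩ := hbase.2 O hO hOne
      rw [Set.mem_iUnion] at hP
      obtain ⟨n, hPn⟩ := hP
      obtain ⟨R, hR, hRP⟩ := hcov n P hPn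
      rcases hR with hR | hR
      · refine ⟨R, Set.mem_iUnion.2 ⟨2 * n, ?_⟩, hRP.trans hPO⟩
        have he : Even (2 * n) := even_two_mul n
        have hdiv : 2 * n / 2 = n := by omega
        rw [if_pos he, hdiv]
        exact hR
      · refine ⟨R, Set.mem_iUnion.2 ⟨2 * n + 1, ?_⟩, hRP.trans hPO⟩
        have he : ¬ Even (2 * n + 1) := by
          rw [Nat.even_iff]
          omega
        have hdiv : (2 * n + 1) / 2 = n := by omega
        rw [if_neg he, hdiv]
        exact hR
    · intro n
      by_cases he : Even n
      · simp only [if_pos he]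
        exact hd1 _
      · simp only [if_neg he]
        exact hd2 _
end

section
/- If X is a T1 regular topological space with a σ-locally finite π-base, then X has a σ-discrete π-base (i.e., X is π-metrizable). -/
open Set Topology

theorem stmt1 {X : Type*} [TopologicalSpace X] [T1Space X] [RegularSpace X]
    (pb : ℕ → Set (Set X)) (hbase : IsPiBase X (⋃ n, pb n))
    (hlf : ∀ n, IsLocFinFam X (pb n)) : PiMetrizable X := by
  classical
  -- Step 1: for each member P of pb n, choose a shrinking W with constant signature S
  -- on its closure.
  have key : ∀ (n : ℕ) (P : Set X), ∃ (W : Set X) (S : Set (Set X)),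
      P ∈ pb n → IsOpen W ∧ W.Nonempty ∧ closure W ⊆ P ∧ S.Finite ∧ P ∈ S ∧
        ∀ z ∈ closure W, {Q | Q ∈ pb n ∧ z ∈ Q} = S := by
    intro n P
    by_cases hP : P ∈ pb n
    swap
    · exact ⟨∅, ∅, fun h => absurd h hP⟩
    obtain ⟨hPo, hPne⟩ := hbase.1 P (mem_iUnion.2 ⟨n, hP⟩)
    obtain ⟨x, hx⟩ := hPne
    obtain ⟨U, hU, hTfin⟩ := hlf n x
    obtain ⟨U', hU'U, hU'o, hxU'⟩ := mem_nhds_iff.1 hU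
    set R : Set X := P ∩ U' with hRdef
    have hRo : IsOpen R := hPo.inter hU'o
    have hxR : x ∈ R := ⟨hx, hxU'⟩
    set F : X → Set (Set X) := fun z => {Q | Q ∈ pb n ∧ z ∈ Q} with hFdef
    have hFT : ∀ z ∈ U', F z ⊆ {Q ∈ pb n | (Q ∩ U).Nonempty} := by
      intro z hz Q hQ
      exact ⟨hQ.1, ⟨z, hQ.2, hU'U hz⟩⟩
    have hFfin : ∀ z ∈ U', (F z).Finite := fun z hz => hTfin.subset (hFT z hz)
    -- choose a point of R with maximal signature cardinality
    set I : Set ℕ := (fun z => (F z).ncard) '' R with hIdef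
    have hIfin : I.Finite := by
      apply (Set.finite_Iic {Q ∈ pb n | (Q ∩ U).Nonempty}.ncard).subset
      rintro _ ⟨z, hz, rfl⟩
      exact Set.ncard_le_ncard (hFT z hz.2) hTfin
    obtain ⟨m, hmI, hmax⟩ := Set.exists_max_image I id hIfin ⟨_, x, hxR, rfl⟩
    obtain ⟨y, hyR, hym⟩ := hmI
    have hmaxy : ∀ z ∈ R, (F z).ncard ≤ (F y).ncard := by
      intro z hz
      exact le_of_le_of_eq (hmax _ ⟨z, hz, rfl⟩) hym.symm
    -- the open set V on which the signature can only grow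
    have hSfin : (F y).Finite := hFfin y hyR.2
    set V : Set X := R ∩ ⋂₀ (F y) with hVdef
    have hVo : IsOpen V := hRo.inter (hSfin.isOpen_sInter fun Q hQ => (hbase.1 Q (mem_iUnion.2 ⟨n, hQ.1⟩)).1)
    have hyV : y ∈ V := ⟨hyR, fun Q hQ => hQ.2⟩
    obtain ⟨C, hCnhds, hCcl, hCV⟩ := exists_mem_nhds_isClosed_subset (hVo.mem_nhds hyV)
    refine ⟨interior C, F y, fun _ => ⟨isOpen_interior, ⟨y, mem_interior_iff_mem_nhds.2 hCnhds⟩,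
      ?_, hSfin, ⟨hP, hyR.1⟩, ?_⟩⟩
    · exact fun z hz => (hCV ((hCcl.closure_subset_iff.2 interior_subset) hz)).1.1
    · intro z hz
      have hzV : z ∈ V := hCV ((hCcl.closure_subset_iff.2 interior_subset) hz)
      have h1 : F y ⊆ F z := fun Q hQ => ⟨hQ.1, hzV.2 Q hQ⟩
      exact (Set.eq_of_subset_of_ncard_le h1 (hmaxy z hzV.1) (hFfin z hzV.1.2)).symm
  choose Wf Sf hkey using key
  -- Step 2: an indexing function injective on each signature
  have jex : ∀ S : Set (Set X), ∃ f : Set X → ℕ, S.Finite → Set.InjOn f S := by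
    intro S
    by_cases hS : S.Finite
    · obtain ⟨f, hf⟩ := Set.countable_iff_exists_injOn.1 hS.countable
      exact ⟨f, fun _ => hf⟩
    · exact ⟨fun _ => 0, fun h => absurd h hS⟩
  choose jfS hjfS using jex
  set jf : ℕ → Set X → ℕ := fun n P => jfS (Sf n P) P with hjfdef
  -- key consequences
  have hWo : ∀ n P, P ∈ pb n → IsOpen (Wf n P) := fun n P h => (hkey n P h).1
  have hWne : ∀ n P, P ∈ pb n → (Wf n P).Nonempty := fun n P h => (hkey n P h).2.1
  have hWsub : ∀ n P, P ∈ pb n → closure (Wf n P) ⊆ P := fun n P h => (hkey n P h).2.2.1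
  have hinj : ∀ n P P', P ∈ pb n → P' ∈ pb n →
      (closure (Wf n P) ∩ closure (Wf n P')).Nonempty → jf n P = jf n P' → P = P' := by
    intro n P P' hP hP' ⟨z, hz1, hz2⟩ hj
    have hS : Sf n P = Sf n P' := by
      rw [← (hkey n P hP).2.2.2.2.2 z hz1, ← (hkey n P' hP').2.2.2.2.2 z hz2]
    have hPS : P ∈ Sf n P := (hkey n P hP).2.2.2.2.1
    have hP'S : P' ∈ Sf n P := hS ▸ (hkey n P' hP').2.2.2.2.1
    exact hjfS (Sf n P) (hkey n P hP).2.2.2.1 hPS hP'S (by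
      simpa [hjfdef, hS] using hj)
  -- Step 3: the σ-discrete refinement
  set Fam : ℕ → ℕ → Set (Set X) := fun n j =>
    {W | ∃ P ∈ pb n, jf n P = j ∧ W = Wf n P} with hFamdef
  set e : ℕ × ℕ ≃ ℕ := Denumerable.eqv (ℕ × ℕ) with hedef
  refine ⟨fun m => Fam (e.symm m).1 (e.symm m).2, ⟨?_, ?_⟩, ?_⟩
  · rintro W hW
    obtain ⟨m, hm⟩ := mem_iUnion.1 hW
    obtain ⟨P, hP, -, rfl⟩ := hm
    exact ⟨hWo _ P hP, hWne _ P hP⟩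
  · intro O hOo hOne
    obtain ⟨P, hP, hPO⟩ := hbase.2 O hOo hOne
    obtain ⟨n, hPn⟩ := mem_iUnion.1 hP
    refine ⟨Wf n P, mem_iUnion.2 ⟨e (n, jf n P), ?_⟩,
      fun z hz => hPO (hWsub n P hPn (subset_closure hz))⟩
    rw [Equiv.symm_apply_apply]
    exact ⟨P, hPn, rfl, rfl⟩
  · intro m x
    set n := (e.symm m).1
    set j := (e.symm m).2
    obtain ⟨U, hU, hTfin⟩ := hlf n x
    -- the relevant members
    set Cs : Set (Set X) := {P ∈ pb n | jf n P = j ∧ (Wf n P ∩ U).Nonempty} with hCsdef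
    have hCfin : Cs.Finite := by
      apply hTfin.subset
      rintro P ⟨hP, -, z, hz1, hz2⟩
      exact ⟨hP, z, hWsub n P hP (subset_closure hz1), hz2⟩
    set K : Set X := ⋃ P ∈ {P ∈ Cs | x ∉ closure (Wf n P)}, closure (Wf n P) with hKdef
    have hKcl : IsClosed K :=
      (hCfin.subset (sep_subset _ _)).isClosed_biUnion fun P _ => isClosed_closure
    have hxK : x ∉ K := by
      rw [hKdef]
      simp only [mem_iUnion]
      rintro ⟨P, ⟨-, hPx⟩, hx⟩
      exact hPx hx
    refine ⟨U ∩ Kᶜ, Filter.inter_mem hU (hKcl.isOpen_compl.mem_nhds hxK), ?_⟩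
    rintro W ⟨⟨P, hP, hjP, rfl⟩, z, hzW, hzU, hzK⟩ W' ⟨⟨P', hP', hjP', rfl⟩, z', hzW', hzU', hzK'⟩
    have hPC : P ∈ Cs := ⟨hP, hjP, z, hzW, hzU⟩
    have hP'C : P' ∈ Cs := ⟨hP', hjP', z', hzW', hzU'⟩
    have hxP : x ∈ closure (Wf n P) := by
      by_contra hc
      exact hzK (mem_biUnion ⟨hPC, hc⟩ (subset_closure hzW))
    have hxP' : x ∈ closure (Wf n P') := by
      by_contra hc
      exact hzK' (mem_biUnion ⟨hP'C, hc⟩ (subset_closure hzW'))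
    rw [hinj n P P' hP hP' ⟨x, hxP, hxP'⟩ (hjP.trans hjP'.symm)]
end

section
/- Let P be a hereditarily closure-preserving collection of open subsets of a space X, let A ⊆ X, and let x be an accumulation point of A. If G is a Gδ-set of X with x ∈ G and G ∩ (A \ {x}) = ∅, then the subfamily {P ∈ P : x ∈ P} is finite. -/
open Set Topology

theorem stmt2 {X : Type*} [TopologicalSpace X] (pb : Set (Set X))
    (hopen : ∀ P ∈ pb, IsOpen P) (hHCP : IsHCP X pb)
    (A : Set X) (x : X) (hacc : ∀ U ∈ nhds x, ((A \ {x}) ∩ U).Nonempty)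
    (G : Set X) (hG : IsGδ G) (hxG : x ∈ G) (hGA : G ∩ (A \ {x}) = ∅) :
    {P ∈ pb | x ∈ P}.Finite := by
  by_contra hinf
  rw [← Set.not_infinite, not_not] at hinf
  -- enumerate countably many distinct members containing x
  obtain ⟨U, hUopen, hGU⟩ := hG.eq_iInter_nat
  obtain ⟨e, einj⟩ := hinf.natEmbedding _
  set P : ℕ → Set X := fun n => (e n).1 with hPdef
  have hPinj : Function.Injective P := fun a b h => einj (Subtype.ext h)
  have hPpb : ∀ n, P n ∈ pb := fun n => (e n).2.1
  have hxP : ∀ n, x ∈ P n := fun n => (e n).2.2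
  have hxU : ∀ n, x ∈ U n := by
    intro n
    have := hGU ▸ hxG
    exact Set.mem_iInter.mp this n
  -- decreasing open neighborhoods
  set V : ℕ → Set X := fun n => ⋂ k ∈ Finset.range (n + 1), (P k ∩ U k) with hVdef
  have hVopen : ∀ n, IsOpen (V n) := by
    intro n
    exact isOpen_biInter_finset fun k _ => ((hopen _ (hPpb k)).inter (hUopen k))
  have hxV : ∀ n, x ∈ V n := by
    intro n
    exact Set.mem_biInter fun k _ => ⟨hxP k, hxU k⟩
  have hVsub : ∀ n k, k ≤ n → V n ⊆ P k ∩ U k := by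
    intro n k hk a ha
    exact Set.mem_iInter₂.mp ha k (Finset.mem_range.mpr (Nat.lt_succ_of_le hk))
  have hVmono : ∀ n, V (n + 1) ⊆ V n := by
    intro n a ha
    exact Set.mem_biInter fun k hk =>
      Set.mem_iInter₂.mp ha k (Finset.mem_range.mpr (Nat.lt_succ_of_lt (Finset.mem_range.mp hk)))
  have hVG : ∀ a, (∀ n, a ∈ V n) → a ∈ G := by
    intro a ha
    rw [hGU]
    exact Set.mem_iInter.mpr fun n => (hVsub n n le_rfl (ha n)).2
  -- the selection
  set B : ℕ → Set X := fun n => (V n \ V (n + 1)) ∩ (A \ {x}) with hBdef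
  have hBsub : ∀ n, B n ⊆ P n := fun n a ha => (hVsub n n le_rfl ha.1.1).1
  classical
  set S : Set X → Set X := fun Q => if h : ∃ n, P n = Q then B h.choose else ∅ with hSdef
  have hSP : ∀ n, S (P n) = B n := by
    intro n
    have h : ∃ m, P m = P n := ⟨n, rfl⟩
    have : h.choose = n := hPinj h.choose_spec
    simp only [hSdef, dif_pos h, this]
  have hSsub : ∀ Q, S Q ⊆ Q := by
    intro Q
    simp only [hSdef]
    split
    · next h => exact subset_trans (hBsub h.choose) (le_of_eq h.choose_spec)
    · exact Set.empty_subset _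
  have hkey := hHCP S hSsub (Set.range P) (Set.range_subset_iff.mpr hPpb)
  have hUnion : (⋃ Q ∈ Set.range P, S Q) = ⋃ n, B n := by
    ext a
    simp only [Set.mem_iUnion, Set.mem_range, exists_prop, exists_exists_eq_and]
    constructor
    · rintro ⟨n, ha⟩; exact ⟨n, hSP n ▸ ha⟩
    · rintro ⟨n, ha⟩; exact ⟨n, (hSP n).symm ▸ ha⟩
  -- x is in the closure of the union
  have hxcl : x ∈ closure (⋃ n, B n) := by
    rw [mem_closure_iff]
    intro o ho hxo
    obtain ⟨a, haA, hao, haV0⟩ : ∃ a, a ∈ A \ {x} ∧ a ∈ o ∧ a ∈ V 0 := by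
      obtain ⟨a, haA, hao⟩ := hacc (o ∩ V 0)
        (Filter.inter_mem (ho.mem_nhds hxo) ((hVopen 0).mem_nhds (hxV 0)))
      exact ⟨a, haA, hao.1, hao.2⟩
    have haG : a ∉ G := fun h => Set.eq_empty_iff_forall_notMem.mp hGA a ⟨h, haA⟩
    have hex : ∃ n, a ∉ V n := by
      by_contra h
      push_neg at h
      exact haG (hVG a h)
    -- least n with a ∉ V (n+1) while a ∈ V n
    have h2 : ∃ n, a ∈ V n ∧ a ∉ V (n + 1) := by
      by_contra h
      push_neg at h
      have hall : ∀ n, a ∈ V n := by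
        intro n
        induction n with
        | zero => exact haV0
        | succ m ih => exact h m ih
      exact hex.elim fun n hn => hn (hall n)
    obtain ⟨n, h1, h2⟩ := h2
    exact ⟨a, hao, Set.mem_iUnion.mpr ⟨n, ⟨⟨h1, h2⟩, haA⟩⟩⟩
  rw [hUnion] at hkey
  rw [hkey] at hxcl
  simp only [Set.mem_iUnion, Set.mem_range, exists_prop, exists_exists_eq_and] at hxcl
  obtain ⟨n, hn⟩ := hxcl
  rw [hSP n] at hn
  rw [mem_closure_iff] at hn
  obtain ⟨a, haV, haB⟩ := hn (V (n + 1)) (hVopen (n + 1)) (hxV (n + 1))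
  exact haB.1.2 haV
end

section
/- Let X be a T1 space having a σ-HCP π-base P = ⋃_{n∈ℕ} P_n, where each P_n is hereditarily closure-preserving. Then for every non-isolated point x of X and every n ∈ ℕ, the family {P ∈ P_n : x ∈ P} is finite. -/
open Set Topology

theorem stmt3 {X : Type*} [TopologicalSpace X] [T1Space X]
    (pb : ℕ → Set (Set X)) (hbase : IsPiBase X (⋃ n, pb n))
    (hHCP : ∀ n, IsHCP X (pb n))
    (x : X) (hx : ¬ IsOpen ({x} : Set X)) (n : ℕ) :
    {P ∈ pb n | x ∈ P}.Finite := by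
  classical
  by_contra hfin
  have hinf : {P ∈ pb n | x ∈ P}.Infinite := hfin
  obtain e := Set.Infinite.natEmbedding _ hinf
  set Pseq : ℕ → Set X := fun k => (e k : Set X) with hPseqdef
  have hPinj : Function.Injective Pseq := fun a b h => e.injective (Subtype.coe_injective h)
  have hPmem : ∀ k, Pseq k ∈ pb n := fun k => ((e k).2 : _ ∈ pb n ∧ x ∈ _).1
  have hPx : ∀ k, x ∈ Pseq k := fun k => ((e k).2 : _ ∈ pb n ∧ x ∈ _).2
  have hPopen : ∀ k, IsOpen (Pseq k) :=
    fun k => (hbase.1 _ (Set.mem_iUnion.mpr ⟨n, hPmem k⟩)).1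
  -- key: HCP along the sequence Pseq
  have key : ∀ A : ℕ → Set X, (∀ k, A k ⊆ Pseq k) →
      closure (⋃ k, A k) = ⋃ k, closure (A k) := by
    intro A hA
    set S : Set X → Set X := fun B => if h : ∃ k, Pseq k = B then A h.choose ∩ B else ∅
      with hSdef
    have hSsub : ∀ B, S B ⊆ B := by
      intro B
      simp only [hSdef]
      split
      · exact Set.inter_subset_right
      · exact Set.empty_subset B
    have hSP : ∀ k, S (Pseq k) = A k := by
      intro k
      have h : ∃ j, Pseq j = Pseq k := ⟨k, rfl⟩
      have hk : h.choose = k := hPinj h.choose_spec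
      simp only [hSdef, dif_pos h, hk, Set.inter_eq_left.mpr (hA k)]
    have hres := hHCP n S hSsub (Set.range Pseq) (Set.range_subset_iff.mpr hPmem)
    simpa only [Set.biUnion_range, hSP] using hres
  -- finite intersections
  set G : ℕ → Set X := fun k => ⋂ j ∈ Finset.range (k+1), Pseq j with hGdef
  have hGopen : ∀ k, IsOpen (G k) := fun k => isOpen_biInter_finset fun j _ => hPopen j
  have hGx : ∀ k, x ∈ G k := fun k => Set.mem_iInter₂.mpr fun j _ => hPx j
  have hGP : ∀ k, G k ⊆ Pseq k := fun k =>
    Set.biInter_subset_of_mem (Finset.self_mem_range_succ k)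
  by_cases hcase : x ∈ closure (G 0 \ ⋂ k, G k)
  · -- Case 1: shells G k \ G (k+1) violate HCP
    have hsub : ∀ k, (G k \ G (k+1)) ⊆ Pseq k := fun k => Set.diff_subset.trans (hGP k)
    have hk := key (fun k => G k \ G (k+1)) hsub
    have hxA : x ∈ ⋃ k, closure (G k \ G (k+1)) := by
      rw [← hk]
      refine closure_mono ?_ hcase
      rintro y ⟨hy0, hyI⟩
      have hex : ∃ k, y ∉ G k := by
        by_contra h
        push_neg at h
        exact hyI (Set.mem_iInter.mpr h)
      have hk0 : y ∉ G (Nat.find hex) := Nat.find_spec hex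
      have hk0ne : Nat.find hex ≠ 0 := fun h => hk0 (h ▸ hy0)
      have hylt : y ∈ G (Nat.find hex - 1) := not_not.mp (Nat.find_min hex (by omega))
      refine Set.mem_iUnion.mpr ⟨Nat.find hex - 1, hylt, ?_⟩
      have heq : Nat.find hex - 1 + 1 = Nat.find hex := by omega
      rw [heq]
      exact hk0
    obtain ⟨k, hkcl⟩ := Set.mem_iUnion.mp hxA
    obtain ⟨y, hy1, hy2⟩ := mem_closure_iff.mp hkcl (G (k+1)) (hGopen _) (hGx _)
    exact hy2.2 hy1
  · -- Case 2: an open V ∋ x contained in every Pseq k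
    rw [mem_closure_iff] at hcase
    push_neg at hcase
    obtain ⟨U, hUopen, hxU, hUdisj⟩ := hcase
    set V : Set X := U ∩ G 0 with hVdef
    have hVopen : IsOpen V := hUopen.inter (hGopen 0)
    have hxV : x ∈ V := ⟨hxU, hGx 0⟩
    have hVP : ∀ k, V ⊆ Pseq k := by
      intro k y hy
      have hyI : y ∈ ⋂ j, G j := by
        by_contra h
        have hmem : y ∈ U ∩ (G 0 \ ⋂ k, G k) := ⟨hy.1, hy.2, h⟩
        rw [hUdisj] at hmem
        exact hmem
      exact hGP k (Set.mem_iInter.mp hyI k)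
    set VV : Set X := V \ {x} with hVVdef
    set Spt : Set X → Set X := fun B => if h : B.Nonempty then {h.some} else ∅ with hSptdef
    have hSptsub : ∀ B, Spt B ⊆ B := by
      intro B
      simp only [hSptdef]
      split
      · next h => exact Set.singleton_subset_iff.mpr h.some_mem
      · exact Set.empty_subset B
    set T : ℕ → Set X := fun m => ⋃ Q ∈ {Q | Q ∈ pb m ∧ Q ⊆ VV ∧ x ∉ closure Q}, Q with hTdef
    set Pts : ℕ → Set X :=
      fun m => ⋃ Q ∈ {Q | Q ∈ pb m ∧ Q ⊆ VV ∧ x ∈ closure Q}, Spt Q with hPtsdef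
    have hTcl : ∀ m, x ∉ closure (T m) := by
      intro m hmem
      have heq := hHCP m id (fun _ => subset_rfl)
        {Q | Q ∈ pb m ∧ Q ⊆ VV ∧ x ∉ closure Q} (fun Q hQ => hQ.1)
      simp only [id_eq] at heq
      rw [hTdef] at hmem
      rw [heq] at hmem
      obtain ⟨Q, hQ, hxQ⟩ := Set.mem_iUnion₂.mp hmem
      exact hQ.2.2 hxQ
    have hPtscl : ∀ m, x ∉ closure (Pts m) := by
      intro m hmem
      have heq := hHCP m Spt hSptsub
        {Q | Q ∈ pb m ∧ Q ⊆ VV ∧ x ∈ closure Q} (fun Q hQ => hQ.1)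
      rw [hPtsdef] at hmem
      rw [heq] at hmem
      obtain ⟨Q, hQ, hxQ⟩ := Set.mem_iUnion₂.mp hmem
      have hne : Q.Nonempty := (hbase.1 Q (Set.mem_iUnion.mpr ⟨m, hQ.1⟩)).2
      rw [hSptdef] at hxQ
      simp only [dif_pos hne, closure_singleton, Set.mem_singleton_iff] at hxQ
      have hmemQ := hQ.2.1 hne.some_mem
      rw [hVVdef] at hmemQ
      exact hmemQ.2 (Set.mem_singleton_iff.mpr hxQ.symm)
    have hTsub : ∀ m, T m ⊆ VV := fun m => Set.iUnion₂_subset fun Q hQ => hQ.2.1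
    have hPtssub : ∀ m, Pts m ⊆ VV :=
      fun m => Set.iUnion₂_subset fun Q hQ => (hSptsub Q).trans hQ.2.1
    set A : ℕ → Set X := fun k => if Even k then T (k / 2) else Pts (k / 2) with hAdef
    have hAsub : ∀ k, A k ⊆ Pseq k := by
      intro k
      have h1 : A k ⊆ VV := by
        simp only [hAdef]
        split
        · exact hTsub _
        · exact hPtssub _
      exact h1.trans (Set.diff_subset.trans (hVP k))
    have hAcl : ∀ k, x ∉ closure (A k) := by
      intro k
      simp only [hAdef]
      split
      · exact hTcl _
      · exact hPtscl _
    have hkey := key A hAsub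
    have hxnot : x ∉ closure (⋃ k, A k) := by
      rw [hkey]
      intro hmem
      obtain ⟨k, hk⟩ := Set.mem_iUnion.mp hmem
      exact hAcl k hk
    apply hxnot
    rw [mem_closure_iff]
    intro O hO hxO
    set O' : Set X := (O ∩ V) \ {x} with hO'def
    have hO'open : IsOpen O' := (hO.inter hVopen).sdiff isClosed_singleton
    have hO'ne : O'.Nonempty := by
      by_contra h
      rw [Set.not_nonempty_iff_eq_empty] at h
      apply hx
      have heq : O ∩ V = {x} := by
        apply Set.Subset.antisymm
        · intro y hy
          by_contra hy'
          exact absurd (h ▸ (⟨hy, hy'⟩ : y ∈ O')) (Set.notMem_empty y)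
        · exact Set.singleton_subset_iff.mpr ⟨hxO, hxV⟩
      rw [← heq]
      exact hO.inter hVopen
    obtain ⟨Q, hQmem, hQsub⟩ := hbase.2 O' hO'open hO'ne
    obtain ⟨m, hQm⟩ := Set.mem_iUnion.mp hQmem
    have hQVV : Q ⊆ VV := hQsub.trans (fun y hy => ⟨hy.1.2, hy.2⟩)
    have hQne : Q.Nonempty := (hbase.1 Q hQmem).2
    by_cases hxQ : x ∈ closure Q
    · refine ⟨hQne.some, (hQsub hQne.some_mem).1.1, ?_⟩
      refine Set.mem_iUnion.mpr ⟨2*m+1, ?_⟩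
      have he : ¬ Even (2*m+1) := by simp [Nat.even_add_one, parity_simps]
      have hd : (2*m+1)/2 = m := by omega
      simp only [hAdef, if_neg he, hd, hPtsdef]
      refine Set.mem_iUnion₂.mpr ⟨Q, ⟨hQm, hQVV, hxQ⟩, ?_⟩
      simp only [hSptdef, dif_pos hQne]
      exact Set.mem_singleton _
    · refine ⟨hQne.some, (hQsub hQne.some_mem).1.1, ?_⟩
      refine Set.mem_iUnion.mpr ⟨2*m, ?_⟩
      have he : Even (2*m) := even_two_mul m
      have hd : (2*m)/2 = m := by omega
      simp only [hAdef, if_pos he, hd, hTdef]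
      exact Set.mem_iUnion₂.mpr ⟨Q, ⟨hQm, hQVV, hxQ⟩, hQne.some_mem⟩
end

section
/- If f : X → Y is a quasi-open closed continuous surjection and X is π-metrizable, then Y is π-metrizable. -/
open Set Topology Classical

section AuxiliaryLemmas

set_option linter.unusedSectionVars false in
private lemma subs_closed {Y : Type*} [TopologicalSpace Y] [T1Space Y] {s : Set Y}
    (h : s.Subsingleton) : IsClosed s := by
  rcases h.eq_empty_or_singleton with rfl | ⟨a, rfl⟩
  · exact isClosed_empty
  · exact isClosed_singleton

private lemma reg_aux_s4 {Y : Type*} [TopologicalSpace Y] [RegularSpace Y]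
    {G : Set Y} (hG : IsOpen G) {y : Y} (hy : y ∈ G) :
    ∃ H : Set Y, IsOpen H ∧ y ∈ H ∧ closure H ⊆ G := by
  obtain ⟨s, hs, hsc, hsub⟩ := exists_mem_nhds_isClosed_subset (hG.mem_nhds hy)
  exact ⟨interior s, isOpen_interior, mem_interior_iff_mem_nhds.2 hs,
    (closure_minimal interior_subset hsc).trans hsub⟩

section Rec
variable {Y : Type*} [TopologicalSpace Y] [T1Space Y] [RegularSpace Y]
set_option linter.unusedSectionVars false
set_option maxHeartbeats 1000000

/-- Phase 1: injective choice of points from a well-ordered family of crowded open sets. -/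
lemma xrec [Nonempty Y] {ι : Type*} (r : ι → ι → Prop) [IsWellOrder ι r]
    (V : ι → Set Y) (hVo : ∀ i, IsOpen (V i)) (hVne : ∀ i, (V i).Nonempty)
    (hcr : ∀ i, ∀ z ∈ V i, ¬ IsOpen ({z} : Set Y))
    (hcpIdx : ∀ S : ι → Set Y, (∀ i, S i ⊆ V i) →
      closure (⋃ i, S i) ⊆ ⋃ i, closure (S i)) :
    ∃ x : ι → Y, (∀ i, x i ∈ V i) ∧ Function.Injective x := by
  have wf : WellFounded r := IsWellFounded.wf
  set body : ∀ i : ι, (∀ j, r j i → Y) → Y := fun i rec =>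
    if h : (V i \ ⋃ j, ⋃ (hj : r j i), {rec j hj}).Nonempty then h.choose
    else Classical.arbitrary Y with hbody
  set x : ι → Y := wf.fix body with hx
  have hxeq : ∀ i, x i = body i (fun j _ => x j) := fun i => wf.fix_eq body i
  -- invariant
  have key : ∀ i, x i ∈ V i ∧ ∀ j, r j i → x i ≠ x j := by
    intro i
    induction i using wf.induction with
    | _ i IH =>
      have hne : (V i \ ⋃ j, ⋃ (hj : r j i), {x j}).Nonempty := by
        by_contra hemp
        rw [Set.not_nonempty_iff_eq_empty, diff_eq_empty] at hemp
        -- every subset of R := ⋃ j<i {x j} is closed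
        have hsubcl : ∀ T ⊆ (⋃ j, ⋃ (hj : r j i), ({x j} : Set Y)), IsClosed T := by
          intro T hT
          set S : ι → Set Y := fun j => (⋃ (hj : r j i), ({x j} : Set Y)) ∩ T with hS
          have hSV : ∀ j, S j ⊆ V j := by
            intro j
            refine (inter_subset_left).trans ?_
            exact iUnion_subset fun hj => by
              simpa using (IH j hj).1
          have hTeq : T = ⋃ j, S j := by
            apply subset_antisymm
            · intro z hz
              obtain ⟨s, ⟨j, rfl⟩, hzs⟩ := hT hz
              exact mem_iUnion.2 ⟨j, ⟨hzs, hz⟩⟩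
            · exact iUnion_subset fun j => inter_subset_right
          rw [hTeq]
          apply isClosed_of_closure_subset
          refine (hcpIdx S hSV).trans (iUnion_mono fun j => ?_)
          have hss : (S j).Subsingleton := by
            intro a ha b hb
            obtain ⟨_, ha'⟩ := mem_iUnion.1 ha.1
            obtain ⟨_, hb'⟩ := mem_iUnion.1 hb.1
            rw [mem_singleton_iff.1 ha', mem_singleton_iff.1 hb']
          rw [(subs_closed hss).closure_eq]
        obtain ⟨z, hz⟩ := hVne i
        have hzopen : IsOpen ({z} : Set Y) := by
          have heq : ({z} : Set Y) = V i \ ((⋃ j, ⋃ (hj : r j i), ({x j} : Set Y)) \ {z}) := by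
            apply subset_antisymm
            · intro w hw; rcases hw with rfl
              exact ⟨hz, fun hw' => hw'.2 rfl⟩
            · intro w hw
              have hwR : w ∈ (⋃ j, ⋃ (hj : r j i), ({x j} : Set Y)) := hemp hw.1
              by_contra hne
              exact hw.2 ⟨hwR, fun h => hne h⟩
          rw [heq]
          exact (hVo i).sdiff (hsubcl _ diff_subset)
        exact hcr i z hz hzopen
      have hmem : x i ∈ V i \ ⋃ j, ⋃ (hj : r j i), {x j} := by
        rw [hxeq i, hbody]
        simp only [dif_pos hne]
        exact hne.choose_spec
      refine ⟨hmem.1, fun j hj hne' => ?_⟩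
      apply hmem.2
      exact mem_iUnion.2 ⟨j, mem_iUnion.2 ⟨hj, by simp [hne']⟩⟩
  refine ⟨x, fun i => (key i).1, fun i j heq => ?_⟩
  by_contra hij
  rcases trichotomous (r := r) i j with h | h | h
  · exact (key j).2 i h heq.symm
  · exact hij h
  · exact (key i).2 j h heq

/-- Phase 2: shrink to open sets with pairwise disjoint closures. -/
lemma hrec {ι : Type*} (r : ι → ι → Prop) [IsWellOrder ι r]
    (V : ι → Set Y) (hVo : ∀ i, IsOpen (V i))
    (x : ι → Y) (hx : ∀ i, x i ∈ V i) (hxinj : Function.Injective x)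
    (D : Set Y) (hxD : ∀ i, x i ∈ D) (hD : ∀ T ⊆ D, IsClosed T)
    (hcpIdx : ∀ S : ι → Set Y, (∀ i, S i ⊆ V i) →
      closure (⋃ i, S i) ⊆ ⋃ i, closure (S i)) :
    ∃ H : ι → Set Y,
      (∀ i, IsOpen (H i) ∧ x i ∈ H i ∧ closure (H i) ⊆ V i ∧ closure (H i) ∩ D ⊆ {x i}) ∧
      (∀ i j, i ≠ j → closure (H i) ∩ closure (H j) = ∅) := by
  have wf : WellFounded r := IsWellFounded.wf
  set P : ι → Set Y → Set Y → Prop := fun i A HH =>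
    IsOpen HH ∧ x i ∈ HH ∧ closure HH ⊆ V i ∧ closure HH ∩ (D \ {x i}) = ∅ ∧
      closure HH ∩ closure A = ∅ with hP
  set body : ∀ i : ι, (∀ j, r j i → Set Y) → Set Y := fun i rec =>
    if h : ∃ HH, P i (⋃ j, ⋃ (hj : r j i), rec j hj) HH then h.choose
    else ∅ with hbody
  set H : ι → Set Y := wf.fix body with hH
  have hHeq : ∀ i, H i = body i (fun j _ => H j) := fun i => wf.fix_eq body i
  set prevU : ι → Set Y := fun i => ⋃ j, ⋃ (hj : r j i), H j with hprevU
  have key : ∀ i, P i (prevU i) (H i) := by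
    intro i
    induction i using wf.induction with
    | _ i IH =>
      have hex : ∃ HH, P i (⋃ j, ⋃ (hj : r j i), H j) HH := by
        have hGo : IsOpen (V i ∩ (D \ {x i})ᶜ ∩ (closure (prevU i))ᶜ) := by
          refine ((hVo i).inter ?_).inter (isClosed_closure.isOpen_compl)
          exact (hD _ diff_subset).isOpen_compl
        have hxmem : x i ∈ V i ∩ (D \ {x i})ᶜ ∩ (closure (prevU i))ᶜ := by
          refine ⟨⟨hx i, fun h => h.2 rfl⟩, ?_⟩
          intro hxcl
          have hsub : closure (prevU i) ⊆ ⋃ j, closure (⋃ (hj : r j i), H j) := by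
            apply hcpIdx
            intro j
            refine iUnion_subset fun hj => ?_
            exact subset_closure.trans (IH j hj).2.2.1
          obtain ⟨j, hj⟩ := mem_iUnion.1 (hsub hxcl)
          by_cases hrji : r j i
          · have hEq : (⋃ (hj : r j i), H j) = H j := by
              apply subset_antisymm (iUnion_subset fun _ => subset_refl _)
              exact subset_iUnion_of_subset hrji (subset_refl _)
            rw [hEq] at hj
            have h1 : x i ∈ closure (H j) ∩ (D \ {x j}) ∨ x i = x j := by
              by_cases h : x i = x j
              · exact Or.inr h
              · exact Or.inl ⟨hj, hxD i, h⟩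
            rcases h1 with h1 | h1
            · rw [(IH j hrji).2.2.2.1] at h1; exact h1
            · have : i = j := hxinj h1
              rw [this] at hrji; exact (irrefl j) hrji
          · have hEq : (⋃ (hj : r j i), H j) = (∅ : Set Y) := by
              simp [hrji]
            rw [hEq] at hj
            simp at hj
        obtain ⟨HH, hHHo, hHHx, hHHcl⟩ := reg_aux_s4 hGo hxmem
        refine ⟨HH, hHHo, hHHx, fun z hz => (hHHcl hz).1.1, ?_, ?_⟩
        · apply eq_empty_iff_forall_notMem.2
          intro z hz
          exact (hHHcl hz.1).1.2 hz.2
        · apply eq_empty_iff_forall_notMem.2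
          intro z hz
          exact (hHHcl hz.1).2 hz.2
      have : H i = Classical.choose hex := by
        rw [hHeq i, hbody]
        simp only [dif_pos hex]
      rw [hprevU]
      rw [this]
      exact Classical.choose_spec hex
  refine ⟨H, fun i => ⟨(key i).1, (key i).2.1, (key i).2.2.1, ?_⟩, ?_⟩
  · intro z hz
    by_cases h : z = x i
    · exact h
    · exfalso
      have : z ∈ closure (H i) ∩ (D \ {x i}) := ⟨hz.1, hz.2, h⟩
      rw [(key i).2.2.2.1] at this
      exact this
  · have main : ∀ i j, r j i → closure (H i) ∩ closure (H j) = ∅ := by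
      intro i j hji
      have h1 : closure (H j) ⊆ closure (prevU i) := by
        apply closure_mono
        exact subset_iUnion_of_subset j (subset_iUnion_of_subset hji (subset_refl _))
      apply eq_empty_iff_forall_notMem.2
      intro z hz
      have : z ∈ closure (H i) ∩ closure (prevU i) := ⟨hz.1, h1 hz.2⟩
      rw [(key i).2.2.2.2] at this
      exact this
    intro i j hij
    rcases trichotomous (r := r) i j with h | h | h
    · rw [inter_comm]; exact main j i h
    · exact absurd h hij
    · exact main i j h

lemma main_lemma (ℱ : Set (Set Y)) (hop : ∀ F ∈ ℱ, IsOpen F ∧ F.Nonempty)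
    (hcp : ∀ S : Set Y → Set Y, (∀ F ∈ ℱ, S F ⊆ F) →
      closure (⋃ F ∈ ℱ, S F) ⊆ ⋃ F ∈ ℱ, closure (S F)) :
    ∃ W : Set (Set Y), (∀ P ∈ W, IsOpen P ∧ P.Nonempty) ∧ IsDiscreteFam Y W ∧
      ∀ F ∈ ℱ, ∃ P ∈ W, P ⊆ F := by
  rcases isEmpty_or_nonempty Y with hY | hY
  · refine ⟨∅, by simp, fun y => isEmptyElim y, fun F hF => ?_⟩
    obtain ⟨z, _⟩ := (hop F hF).2
    exact isEmptyElim z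
  set Iso : Set Y := {z : Y | IsOpen ({z} : Set Y)} with hIso
  set Fiso : Set (Set Y) := {F ∈ ℱ | (F ∩ Iso).Nonempty} with hFiso
  set Fcr : Set (Set Y) := ℱ \ Fiso with hFcr
  have hcrF : Fcr ⊆ ℱ := diff_subset
  have hisoF : Fiso ⊆ ℱ := sep_subset _ _
  have hcrNoIso : ∀ F ∈ Fcr, ∀ z ∈ F, ¬ IsOpen ({z} : Set Y) := by
    intro F hF z hz hzo
    exact hF.2 ⟨hF.1, ⟨z, hz, hzo⟩⟩
  -- the isolated-point choice
  set pt : Set Y → Y := fun F => if h : (F ∩ Iso).Nonempty then h.choose else Classical.arbitrary Y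
    with hptdef
  have hpt : ∀ F ∈ Fiso, pt F ∈ F ∧ IsOpen ({pt F} : Set Y) := by
    intro F hF
    have h := hF.2
    have hspec := h.choose_spec
    rw [hptdef]
    simp only [dif_pos h]
    exact ⟨hspec.1, hspec.2⟩
  -- index type
  set ι : Type _ := ↥Fcr with hι
  set r : ι → ι → Prop := WellOrderingRel with hr
  haveI : IsWellOrder ι r := WellOrderingRel.isWellOrder
  set V : ι → Set Y := fun i => (i : Set Y) with hV
  have hVℱ : ∀ i : ι, V i ∈ ℱ := fun i => hcrF i.2
  have hVo : ∀ i, IsOpen (V i) := fun i => (hop _ (hVℱ i)).1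
  have hVne : ∀ i, (V i).Nonempty := fun i => (hop _ (hVℱ i)).2
  have hVcr : ∀ i : ι, ∀ z ∈ V i, ¬ IsOpen ({z} : Set Y) := fun i => hcrNoIso _ i.2
  -- indexed HCP
  have hcpIdx : ∀ S : ι → Set Y, (∀ i, S i ⊆ V i) →
      closure (⋃ i, S i) ⊆ ⋃ i, closure (S i) := by
    intro S hS
    set S' : Set Y → Set Y := fun F => ⋃ i : ι, ⋃ (_ : (i : Set Y) = F), S i with hS'
    have h1 : ∀ F ∈ ℱ, S' F ⊆ F :=
      fun F _ => iUnion_subset fun i => iUnion_subset fun hi => hi ▸ hS i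
    have h2 : (⋃ F ∈ ℱ, S' F) = ⋃ i, S i := by
      apply subset_antisymm
      · exact iUnion₂_subset fun F hF =>
          iUnion_subset fun i => iUnion_subset fun _ => subset_iUnion S i
      · intro z hz
        obtain ⟨i, hi⟩ := mem_iUnion.1 hz
        exact mem_biUnion (hVℱ i) (mem_iUnion.2 ⟨i, mem_iUnion.2 ⟨rfl, hi⟩⟩)
    have h3 := hcp S' h1
    rw [h2] at h3
    refine h3.trans (iUnion₂_subset fun F hF => ?_)
    by_cases hex : ∃ i : ι, (i : Set Y) = F
    · obtain ⟨i, rfl⟩ := hex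
      have hSF : S' (i : Set Y) = S i := by
        apply subset_antisymm
        · refine iUnion_subset fun j => iUnion_subset fun hj => ?_
          rw [show j = i from Subtype.ext hj]
        · exact subset_iUnion_of_subset i (subset_iUnion_of_subset rfl (subset_refl _))
      rw [hSF]
      exact subset_iUnion (fun i => closure (S i)) i
    · have hSF : S' F = ∅ :=
        subset_empty_iff.1 (iUnion_subset fun i => iUnion_subset fun hi => (hex ⟨i, hi⟩).elim)
      rw [hSF, closure_empty]
      exact empty_subset _
  -- phase 1
  obtain ⟨x, hxV, hxinj⟩ := xrec r V hVo hVne hVcr hcpIdx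
  -- the closed discrete set D
  set D : Set Y := (range x) ∪ (pt '' Fiso) with hDdef
  have hxD : ∀ i, x i ∈ D := fun i => Or.inl (mem_range_self i)
  have hptD : ∀ F ∈ Fiso, pt F ∈ D := fun F hF => Or.inr (mem_image_of_mem pt hF)
  have hDcl : ∀ T ⊆ D, IsClosed T := by
    intro T hT
    have hTeq : T = (T ∩ range x) ∪ (T ∩ pt '' Fiso) := by
      rw [← inter_union_distrib_left]
      exact (inter_eq_left.2 hT).symm
    rw [hTeq]
    apply IsClosed.union
    · set S : ι → Set Y := fun i => {x i} ∩ T with hSdef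
      have hSV : ∀ i, S i ⊆ V i := fun i =>
        inter_subset_left.trans (singleton_subset_iff.2 (hxV i))
      have heq : T ∩ range x = ⋃ i, S i := by
        apply subset_antisymm
        · rintro z ⟨hzT, ⟨i, rfl⟩⟩
          exact mem_iUnion.2 ⟨i, rfl, hzT⟩
        · rintro z hz
          obtain ⟨i, hz1, hz2⟩ := mem_iUnion.1 hz
          exact ⟨hz2, ⟨i, hz1.symm⟩⟩
      rw [heq]
      apply isClosed_of_closure_subset
      refine (hcpIdx S hSV).trans (iUnion_mono fun i => ?_)
      have hsub : (S i).Subsingleton := Subsingleton.anti subsingleton_singleton inter_subset_left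
      rw [(subs_closed hsub).closure_eq]
    · set T' : Set Y → Set Y := fun F => (if F ∈ Fiso then {pt F} else ∅) ∩ T with hT'def
      have hT'F : ∀ F ∈ ℱ, T' F ⊆ F := by
        intro F hF
        refine inter_subset_left.trans ?_
        split
        · next h => exact singleton_subset_iff.2 (hpt F h).1
        · exact empty_subset _
      have heq : T ∩ pt '' Fiso = ⋃ F ∈ ℱ, T' F := by
        apply subset_antisymm
        · rintro z ⟨hzT, ⟨F, hF, rfl⟩⟩
          refine mem_biUnion (hisoF hF) ?_
          rw [hT'def]
          simp only [if_pos hF]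
          exact ⟨rfl, hzT⟩
        · refine iUnion₂_subset fun F hF => ?_
          intro z hz
          rw [hT'def] at hz
          rcases hz with ⟨hz1, hz2⟩
          revert hz1
          split
          · next h =>
            intro hz1
            rw [mem_singleton_iff] at hz1
            exact ⟨hz2, by rw [hz1]; exact mem_image_of_mem pt h⟩
          · intro hz1
            exact hz1.elim
      rw [heq]
      apply isClosed_of_closure_subset
      refine (hcp T' hT'F).trans (iUnion_mono fun F => iUnion_mono fun hF => ?_)
      have hsub : (T' F).Subsingleton := by
        refine Subsingleton.anti ?_ inter_subset_left
        split
        · exact subsingleton_singleton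
        · exact subsingleton_empty
      rw [(subs_closed hsub).closure_eq]
  -- phase 2
  obtain ⟨H, hHp, hHdisj⟩ := hrec r V hVo x hxV hxinj D hxD hDcl hcpIdx
  -- the final family
  set Wsel : Set Y → Set Y := fun F => if h : F ∈ Fcr then H ⟨F, h⟩ else {pt F} with hWsel
  set W : Set (Set Y) := Wsel '' ℱ with hW
  have hmemiso : ∀ F ∈ ℱ, F ∉ Fcr → F ∈ Fiso := by
    intro F hF hFcr'
    by_contra h
    exact hFcr' ⟨hF, h⟩
  have wsub : ∀ F ∈ ℱ, Wsel F ⊆ F := by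
    intro F hF
    simp only [hWsel]
    split
    · next h => exact subset_closure.trans (hHp ⟨F, h⟩).2.2.1
    · next h => exact singleton_subset_iff.2 (hpt F (hmemiso F hF h)).1
  have wopne : ∀ F ∈ ℱ, IsOpen (Wsel F) ∧ (Wsel F).Nonempty := by
    intro F hF
    simp only [hWsel]
    split
    · next h => exact ⟨(hHp ⟨F, h⟩).1, ⟨x ⟨F, h⟩, (hHp ⟨F, h⟩).2.1⟩⟩
    · next h => exact ⟨(hpt F (hmemiso F hF h)).2, singleton_nonempty _⟩
  -- pairwise disjoint closures (up to equality)
  have keyDisj : ∀ F, F ∈ ℱ → ∀ G, G ∈ ℱ → ∀ z, z ∈ closure (Wsel F) →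
      z ∈ closure (Wsel G) → Wsel F = Wsel G := by
    have hcl1 : ∀ F (h : F ∈ Fcr) z, z ∈ closure (Wsel F) → z ∈ closure (H ⟨F, h⟩) := by
      intro F h z hz
      simp only [hWsel] at hz
      rwa [dif_pos h] at hz
    have hcl2 : ∀ F (hF : F ∈ ℱ) (h : F ∉ Fcr) z, z ∈ closure (Wsel F) → z = pt F := by
      intro F hF h z hz
      simp only [hWsel] at hz
      rw [dif_neg h, closure_singleton, mem_singleton_iff] at hz
      exact hz
    have crosscase : ∀ F (hF : F ∈ ℱ) (hFc : F ∈ Fcr) G (hG : G ∈ ℱ) (hGc : G ∉ Fcr) z,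
        z ∈ closure (Wsel F) → z ∈ closure (Wsel G) → False := by
      intro F hF hFc G hG hGc z hzF hzG
      have h1 := hcl1 F hFc z hzF
      have h2 := hcl2 G hG hGc z hzG
      have hzD : z ∈ D := by rw [h2]; exact hptD G (hmemiso G hG hGc)
      have : z = x ⟨F, hFc⟩ := (hHp ⟨F, hFc⟩).2.2.2 ⟨h1, hzD⟩
      have hxIso : IsOpen ({x ⟨F, hFc⟩} : Set Y) := by
        rw [← this, h2]
        exact (hpt G (hmemiso G hG hGc)).2
      exact hVcr ⟨F, hFc⟩ (x ⟨F, hFc⟩) (hxV _) hxIso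
    intro F hF G hG z hzF hzG
    by_cases hFc : F ∈ Fcr <;> by_cases hGc : G ∈ Fcr
    · by_cases hFG : (⟨F, hFc⟩ : ι) = ⟨G, hGc⟩
      · have : F = G := congrArg Subtype.val hFG
        rw [this]
      · exfalso
        have := hHdisj _ _ hFG
        have hz : z ∈ closure (H ⟨F, hFc⟩) ∩ closure (H ⟨G, hGc⟩) :=
          ⟨hcl1 F hFc z hzF, hcl1 G hGc z hzG⟩
        rw [this] at hz
        exact hz
    · exact (crosscase F hF hFc G hG hGc z hzF hzG).elim
    · exact (crosscase G hG hGc F hF hFc z hzG hzF).elim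
    · have h1 := hcl2 F hF hFc z hzF
      have h2 := hcl2 G hG hGc z hzG
      simp only [hWsel]
      rw [dif_neg hFc, dif_neg hGc, ← h1, ← h2]
  -- discreteness
  have hdisc : IsDiscreteFam Y W := by
    intro y
    set Ssel : Set Y → Set Y := fun F => if y ∈ closure (Wsel F) then ∅ else Wsel F with hSsel
    have hSsub : ∀ F ∈ ℱ, Ssel F ⊆ F := by
      intro F hF
      simp only [hSsel]
      split
      · exact empty_subset _
      · exact wsub F hF
    have hycl : y ∉ closure (⋃ F ∈ ℱ, Ssel F) := by
      intro hy
      have := hcp Ssel hSsub hy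
      obtain ⟨s, ⟨F, rfl⟩, hys⟩ := this
      obtain ⟨s', ⟨hF, rfl⟩, hys'⟩ := hys
      by_cases h : y ∈ closure (Wsel F)
      · simp only [hSsel, if_pos h, closure_empty] at hys'
        exact hys'
      · simp only [hSsel, if_neg h] at hys'
        exact h hys'
    refine ⟨(closure (⋃ F ∈ ℱ, Ssel F))ᶜ, (isClosed_closure.isOpen_compl).mem_nhds hycl, ?_⟩
    rintro P ⟨hPW, hPU⟩ Q ⟨hQW, hQU⟩
    obtain ⟨F, hF, rfl⟩ := hPW
    obtain ⟨G, hG, rfl⟩ := hQW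
    have hyP : ∀ E, E ∈ ℱ → ((Wsel E) ∩ (closure (⋃ F ∈ ℱ, Ssel F))ᶜ).Nonempty →
        y ∈ closure (Wsel E) := by
      intro E hE hne
      by_contra h
      obtain ⟨z, hz1, hz2⟩ := hne
      apply hz2
      apply subset_closure
      refine mem_biUnion hE ?_
      simp only [hSsel, if_neg h]
      exact hz1
    exact keyDisj F hF G hG y (hyP F hF hPU) (hyP G hG hQU)
  refine ⟨W, ?_, hdisc, fun F hF => ⟨Wsel F, mem_image_of_mem _ hF, wsub F hF⟩⟩
  rintro P ⟨F, hF, rfl⟩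
  exact wopne F hF

end Rec

/-- A discrete family is hereditarily closure-preserving. -/
lemma discrete_hcp {X : Type*} [TopologicalSpace X] (B : Set (Set X))
    (hB : IsDiscreteFam X B) (S : Set X → Set X) (hS : ∀ P ∈ B, S P ⊆ P) :
    closure (⋃ P ∈ B, S P) ⊆ ⋃ P ∈ B, closure (S P) := by
  intro z hz
  obtain ⟨U, hU, hUs⟩ := hB z
  have hmeet : (U ∩ ⋃ P ∈ B, S P).Nonempty :=
    mem_closure_iff_nhds.1 hz U hU
  obtain ⟨w, hwU, hwS⟩ := hmeet
  obtain ⟨s, ⟨P0, rfl⟩, hws⟩ := hwS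
  obtain ⟨s', ⟨hP0, rfl⟩, hws'⟩ := hws
  have hP0mem : P0 ∈ {P ∈ B | (P ∩ U).Nonempty} := ⟨hP0, ⟨w, hS P0 hP0 hws', hwU⟩⟩
  refine mem_biUnion hP0 (mem_closure_iff_nhds.2 fun V hV => ?_)
  have hmeet2 : (V ∩ U ∩ ⋃ P ∈ B, S P).Nonempty :=
    mem_closure_iff_nhds.1 hz (V ∩ U) (Filter.inter_mem hV hU)
  obtain ⟨u, ⟨huV, huU⟩, huS⟩ := hmeet2
  obtain ⟨s, ⟨P1, rfl⟩, hus⟩ := huS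
  obtain ⟨s', ⟨hP1, rfl⟩, hus'⟩ := hus
  have hP1mem : P1 ∈ {P ∈ B | (P ∩ U).Nonempty} := ⟨hP1, ⟨u, hS P1 hP1 hus', huU⟩⟩
  have : P1 = P0 := hUs hP1mem hP0mem
  exact ⟨u, huV, this ▸ hus'⟩


lemma closed_image_closure {X Y : Type*} [TopologicalSpace X] [TopologicalSpace Y]
    {f : X → Y} (hc : Continuous f) (hcl : IsClosedMap f) (A : Set X) :
    closure (f '' A) = f '' closure A := by
  apply subset_antisymm
  · exact closure_minimal (image_mono (f := f) subset_closure) (hcl _ isClosed_closure)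
  · exact image_closure_subset_closure_image hc


end AuxiliaryLemmas

set_option maxHeartbeats 1000000 in
theorem stmt4 {X Y : Type*} [TopologicalSpace X] [TopologicalSpace Y]
    [T1Space X] [RegularSpace X] [T1Space Y] [RegularSpace Y]
    (f : X → Y) (hc : Continuous f) (hs : Function.Surjective f)
    (hq : QuasiOpenMap f) (hcl : IsClosedMap f)
    (hX : PiMetrizable X) : PiMetrizable Y := by
  obtain ⟨pb, ⟨hPBop, hPBbase⟩, hPBdisc⟩ := hX
  have hopn : ∀ n, ∀ P ∈ pb n, IsOpen P ∧ P.Nonempty :=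
    fun n P hP => hPBop P (mem_iUnion.2 ⟨n, hP⟩)
  -- the image families
  set ℱ : ℕ → Set (Set Y) := fun n => (fun P => interior (f '' P)) '' pb n with hℱ
  have hopF : ∀ n, ∀ F ∈ ℱ n, IsOpen F ∧ F.Nonempty := by
    rintro n F ⟨P, hP, rfl⟩
    exact ⟨isOpen_interior, hq P (hopn n P hP).1 (hopn n P hP).2⟩
  have hcpF : ∀ n, ∀ S : Set Y → Set Y, (∀ F ∈ ℱ n, S F ⊆ F) →
      closure (⋃ F ∈ ℱ n, S F) ⊆ ⋃ F ∈ ℱ n, closure (S F) := by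
    intro n S hS
    rw [hℱ, biUnion_image, biUnion_image]
    set S' : Set X → Set X := fun P => f ⁻¹' (S (interior (f '' P))) ∩ P with hS'
    have hS'P : ∀ P ∈ pb n, S' P ⊆ P := fun P _ => inter_subset_right
    have hSsub : ∀ P ∈ pb n, S (interior (f '' P)) ⊆ f '' P := by
      intro P hP
      exact (hS _ (mem_image_of_mem _ hP)).trans interior_subset
    have him : ∀ P ∈ pb n, f '' S' P = S (interior (f '' P)) := by
      intro P hP
      simp only [hS']
      rw [inter_comm, image_inter_preimage]
      exact inter_eq_right.2 (hSsub P hP)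
    have heq1 : (⋃ P ∈ pb n, S (interior (f '' P))) = f '' ⋃ P ∈ pb n, S' P := by
      rw [image_iUnion₂]
      exact (iUnion₂_congr him).symm
    rw [heq1, closed_image_closure hc hcl]
    have h2 := discrete_hcp (pb n) (hPBdisc n) S' hS'P
    refine (image_mono h2).trans ?_
    rw [image_iUnion₂]
    refine iUnion₂_mono fun P hP => ?_
    refine (image_closure_subset_closure_image hc).trans ?_
    rw [him P hP]
  -- apply the refinement lemma levelwise
  have hWex : ∀ n, ∃ W : Set (Set Y), (∀ P ∈ W, IsOpen P ∧ P.Nonempty) ∧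
      IsDiscreteFam Y W ∧ ∀ F ∈ ℱ n, ∃ P ∈ W, P ⊆ F :=
    fun n => main_lemma (ℱ n) (hopF n) (hcpF n)
  choose W hW1 hW2 hW3 using hWex
  refine ⟨W, ⟨?_, ?_⟩, hW2⟩
  · intro P hP
    obtain ⟨n, hPn⟩ := mem_iUnion.1 hP
    exact hW1 n P hPn
  · intro O hO hOne
    have hpre : IsOpen (f ⁻¹' O) := hO.preimage hc
    have hprene : (f ⁻¹' O).Nonempty := by
      obtain ⟨y, hy⟩ := hOne
      obtain ⟨x0, rfl⟩ := hs y
      exact ⟨x0, hy⟩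
    obtain ⟨P, hPmem, hPsub⟩ := hPBbase (f ⁻¹' O) hpre hprene
    obtain ⟨n, hPn⟩ := mem_iUnion.1 hPmem
    obtain ⟨Q, hQW, hQF⟩ := hW3 n (interior (f '' P)) (mem_image_of_mem _ hPn)
    refine ⟨Q, mem_iUnion.2 ⟨n, hQW⟩, ?_⟩
    refine hQF.trans (interior_subset.trans ?_)
    exact (image_mono (f := f) hPsub).trans (image_preimage_subset f O)
end

section
/- If f : X → Y is an irreducible closed continuous surjection and X is π-metrizable, then Y is π-metrizable. -/
open Set Topology

theorem stmt7 {X Y : Type*} [TopologicalSpace X] [TopologicalSpace Y]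
    [T1Space X] [RegularSpace X] [T1Space Y] [RegularSpace Y]
    (f : X → Y) (hc : Continuous f) (hs : Function.Surjective f)
    (hcl : IsClosedMap f)
    (hirr : ∀ C : Set X, IsClosed C → f '' C = Set.univ → C = Set.univ)
    (hX : PiMetrizable X) : PiMetrizable Y := by
  classical
  obtain ⟨pb, ⟨hpb1, hpb2⟩, hdisc⟩ := hX
  -- the "small image" operator V P = Y \ f(X \ P)
  set V : Set X → Set Y := fun P => (f '' Pᶜ)ᶜ with hV
  -- basic properties of V
  have hVopen : ∀ P : Set X, IsOpen P → IsOpen (V P) := by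
    intro P hP
    exact (hcl Pᶜ hP.isClosed_compl).isOpen_compl
  have hVfiber : ∀ (P : Set X) (z : Y), z ∈ V P ↔ ∀ x, f x = z → x ∈ P := by
    intro P z
    simp only [hV, mem_compl_iff, mem_image, not_exists, not_and]
    constructor
    · intro h x hx
      by_contra hxP
      exact h x hxP hx
    · intro h x hxP hx
      exact hxP (h x hx)
  have hVsubim : ∀ P : Set X, V P ⊆ f '' P := by
    intro P z hz
    obtain ⟨x, hx⟩ := hs z
    exact ⟨x, (hVfiber P z).1 hz x hx, hx⟩
  have hVne : ∀ P : Set X, IsOpen P → P.Nonempty → (V P).Nonempty := by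
    intro P hPo hPne
    by_contra h
    rw [Set.not_nonempty_iff_eq_empty] at h
    have h2 : f '' Pᶜ = Set.univ := by
      have := congrArg compl h
      simpa [hV] using this
    have := hirr Pᶜ hPo.isClosed_compl h2
    obtain ⟨x, hx⟩ := hPne
    have : x ∈ Pᶜ := this ▸ Set.mem_univ x
    exact this hx
  have hVdisj : ∀ P P' : Set X, Disjoint P P' → Disjoint (V P) (V P') := by
    intro P P' hPP'
    rw [Set.disjoint_iff_inter_eq_empty]
    ext z
    simp only [mem_inter_iff, mem_empty_iff_false, iff_false, not_and]
    intro hz hz'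
    obtain ⟨x, hx⟩ := hs z
    have h1 := (hVfiber P z).1 hz x hx
    have h2 := (hVfiber P' z).1 hz' x hx
    exact Set.disjoint_left.1 hPP' h1 h2
  -- members of each layer are open and nonempty
  have hmem : ∀ n, ∀ P ∈ pb n, IsOpen P ∧ P.Nonempty := by
    intro n P hP
    exact hpb1 P (Set.mem_iUnion.2 ⟨n, hP⟩)
  -- distinct members of a discrete layer are disjoint
  have hlayerdisj : ∀ n, ∀ P ∈ pb n, ∀ P' ∈ pb n, P ≠ P' → Disjoint P P' := by
    intro n P hP P' hP' hne
    rw [Set.disjoint_left]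
    intro x hx hx'
    obtain ⟨U, hU, hUs⟩ := hdisc n x
    have hxU : x ∈ U := mem_of_mem_nhds hU
    have h1 : P ∈ {Q ∈ pb n | (Q ∩ U).Nonempty} := ⟨hP, ⟨x, hx, hxU⟩⟩
    have h2 : P' ∈ {Q ∈ pb n | (Q ∩ U).Nonempty} := ⟨hP', ⟨x, hx', hxU⟩⟩
    exact hne (hUs h1 h2)
  -- choose a regular shrinking W P of V P
  have hWex : ∀ P : Set X, IsOpen P → P.Nonempty →
      ∃ W : Set Y, IsOpen W ∧ W.Nonempty ∧ closure W ⊆ V P := by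
    intro P hPo hPne
    obtain ⟨z, hz⟩ := hVne P hPo hPne
    obtain ⟨t, ht, htc, hts⟩ :=
      exists_mem_nhds_isClosed_subset ((hVopen P hPo).mem_nhds hz)
    refine ⟨interior t, isOpen_interior, ⟨z, mem_interior_iff_mem_nhds.2 ht⟩, ?_⟩
    calc closure (interior t) ⊆ closure t := closure_mono interior_subset
    _ = t := htc.closure_eq
    _ ⊆ V P := hts
  choose! W hW1 hW2 hW3 using hWex
  have hWsubV : ∀ P : Set X, IsOpen P → P.Nonempty → W P ⊆ V P := by
    intro P h1 h2
    exact subset_trans subset_closure (hW3 P h1 h2)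
  -- the candidate π-base for Y
  refine ⟨fun n => W '' pb n, ⟨?_, ?_⟩, ?_⟩
  · -- all members open and nonempty
    rintro G hG
    obtain ⟨n, hn⟩ := Set.mem_iUnion.1 hG
    obtain ⟨P, hP, rfl⟩ := hn
    obtain ⟨hPo, hPne⟩ := hmem n P hP
    exact ⟨hW1 P hPo hPne, hW2 P hPo hPne⟩
  · -- π-base property
    intro O hO hOne
    obtain ⟨z, hz⟩ := hOne
    obtain ⟨x, hx⟩ := hs z
    have hpre : (f ⁻¹' O).Nonempty := ⟨x, by simp [hx, hz]⟩
    obtain ⟨P, hP, hPsub⟩ := hpb2 (f ⁻¹' O) (hO.preimage hc) hpre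
    obtain ⟨n, hn⟩ := Set.mem_iUnion.1 hP
    obtain ⟨hPo, hPne⟩ := hmem n P hn
    refine ⟨W P, Set.mem_iUnion.2 ⟨n, Set.mem_image_of_mem W hn⟩, ?_⟩
    calc W P ⊆ V P := hWsubV P hPo hPne
    _ ⊆ f '' P := hVsubim P
    _ ⊆ f '' (f ⁻¹' O) := Set.image_mono hPsub
    _ ⊆ O := Set.image_preimage_subset f O
  · -- each layer is discrete in Y
    intro n y
    by_cases hA : ∃ P ∈ pb n, y ∈ V P
    · -- Case A : y belongs to some V P₀; use V P₀ as the neighborhood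
      obtain ⟨P₀, hP₀, hyV⟩ := hA
      obtain ⟨hP₀o, hP₀ne⟩ := hmem n P₀ hP₀
      refine ⟨V P₀, (hVopen P₀ hP₀o).mem_nhds hyV, ?_⟩
      rintro G ⟨⟨P, hP, rfl⟩, z, hz1, hz2⟩ G' ⟨⟨P', hP', rfl⟩, z', hz1', hz2'⟩
      obtain ⟨hPo, hPne⟩ := hmem n P hP
      obtain ⟨hP'o, hP'ne⟩ := hmem n P' hP'
      have key : ∀ Q ∈ pb n, ∀ w : Y, w ∈ W Q → w ∈ V P₀ → Q = P₀ := by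
        intro Q hQ w hw1 hw2
        obtain ⟨hQo, hQne⟩ := hmem n Q hQ
        by_contra hne
        have hd := hVdisj Q P₀ (hlayerdisj n Q hQ P₀ hP₀ hne)
        exact Set.disjoint_left.1 hd (hWsubV Q hQo hQne hw1) hw2
      rw [key P hP z hz1 hz2, key P' hP' z' hz1' hz2']
    · -- Case B : y is in no V P; build a saturated neighborhood missing all W P
      push_neg at hA
      have hyW : ∀ P ∈ pb n, y ∉ closure (W P) := by
        intro P hP hyc
        obtain ⟨hPo, hPne⟩ := hmem n P hP
        exact hA P hP (hW3 P hPo hPne hyc)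
      -- for each point of the fiber, a good open neighborhood
      have hO : ∀ x : X, f x = y → ∃ O : Set X, IsOpen O ∧ x ∈ O ∧
          ∀ P ∈ pb n, ∀ w ∈ O ∩ P, f w ∉ closure (W P) := by
        intro x hxy
        obtain ⟨U, hU, hUs⟩ := hdisc n x
        have hxU : x ∈ interior U := mem_interior_iff_mem_nhds.2 hU
        by_cases h1 : ∃ P ∈ pb n, x ∈ closure P
        · obtain ⟨P₁, hP₁, hxc⟩ := h1
          refine ⟨interior U ∩ f ⁻¹' (closure (W P₁))ᶜ, ?_, ⟨hxU, ?_⟩, ?_⟩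
          · exact isOpen_interior.inter ((isClosed_closure.isOpen_compl).preimage hc)
          · simpa [hxy] using hyW P₁ hP₁
          · intro P hP w ⟨⟨hw1, hw2⟩, hwP⟩
            have hPP₁ : P = P₁ := by
              have e1 : P ∈ {Q ∈ pb n | (Q ∩ U).Nonempty} :=
                ⟨hP, ⟨w, hwP, interior_subset hw1⟩⟩
              have e2 : P₁ ∈ {Q ∈ pb n | (Q ∩ U).Nonempty} := by
                refine ⟨hP₁, ?_⟩
                have := mem_closure_iff.1 hxc (interior U) isOpen_interior hxU
                obtain ⟨v, hv1, hv2⟩ := this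
                exact ⟨v, hv2, interior_subset hv1⟩
              exact hUs e1 e2
            rw [hPP₁]
            exact hw2
        · push_neg at h1
          by_cases h2 : ∃ P ∈ pb n, (P ∩ interior U).Nonempty
          · obtain ⟨P₁, hP₁, hne⟩ := h2
            refine ⟨interior U ∩ (closure P₁)ᶜ, isOpen_interior.inter
              isClosed_closure.isOpen_compl, ⟨hxU, h1 P₁ hP₁⟩, ?_⟩
            intro P hP w ⟨⟨hw1, hw2⟩, hwP⟩
            exfalso
            have hPP₁ : P = P₁ := by
              have e1 : P ∈ {Q ∈ pb n | (Q ∩ U).Nonempty} :=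
                ⟨hP, ⟨w, hwP, interior_subset hw1⟩⟩
              have e2 : P₁ ∈ {Q ∈ pb n | (Q ∩ U).Nonempty} := by
                obtain ⟨v, hv1, hv2⟩ := hne
                exact ⟨hP₁, ⟨v, hv1, interior_subset hv2⟩⟩
              exact hUs e1 e2
            exact hw2 (subset_closure (hPP₁ ▸ hwP))
          · push_neg at h2
            refine ⟨interior U, isOpen_interior, hxU, ?_⟩
            intro P hP w ⟨hw1, hwP⟩
            have h4 : (P ∩ interior U).Nonempty := ⟨w, hwP, hw1⟩
            exact absurd h4 (Set.not_nonempty_iff_eq_empty.2 (by simpa using h2 P hP))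
      choose! O hO1 hO2 hO3 using hO
      set U₀ : Set X := ⋃ x ∈ {x : X | f x = y}, O x with hU₀
      have hU₀open : IsOpen U₀ := by
        refine isOpen_biUnion ?_
        intro x hx
        exact hO1 x hx
      have hfibU₀ : ∀ x : X, f x = y → x ∈ U₀ := by
        intro x hx
        exact Set.mem_biUnion hx (hO2 x hx)
      set N : Set Y := (f '' U₀ᶜ)ᶜ with hN
      have hNnhds : N ∈ nhds y := by
        refine ((hcl U₀ᶜ hU₀open.isClosed_compl).isOpen_compl).mem_nhds ?_
        simp only [hN, mem_compl_iff, mem_image, not_exists, not_and]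
        intro x hx hxy
        exact hx (hfibU₀ x hxy)
      refine ⟨N, hNnhds, ?_⟩
      -- show the set of members meeting N is empty
      intro G hG G' hG'
      exfalso
      obtain ⟨⟨P, hP, rfl⟩, z, hz1, hz2⟩ := hG
      obtain ⟨hPo, hPne⟩ := hmem n P hP
      -- the fiber of z is inside P and inside U₀
      have hfibP : ∀ x, f x = z → x ∈ P :=
        (hVfiber P z).1 (hWsubV P hPo hPne hz1)
      have hfibU : ∀ x, f x = z → x ∈ U₀ := by
        intro x hx
        by_contra hxn
        exact hz2 ⟨x, hxn, hx⟩
      obtain ⟨w, hw⟩ := hs z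
      obtain ⟨x, hx, hwO⟩ := Set.mem_iUnion₂.1 (hfibU w hw)
      have := hO3 x hx P hP w ⟨hwO, hfibP w hw⟩
      rw [hw] at this
      exact this (subset_closure hz1)
end

section
/- Suppose a topological property 𝒫 is preserved by topological sums and by quasi-open closed continuous surjections. If a space X has a hereditarily closure-preserving covering by regular closed sets each having property 𝒫, then X has property 𝒫. -/
open Set Topology

universe u

theorem stmt8 (P : (Z : Type u) → [TopologicalSpace Z] → Prop)
    (hsum : ∀ (ι : Type u) (Z : ι → Type u) [∀ i, TopologicalSpace (Z i)],
      (∀ i, P (Z i)) → P (Σ i, Z i))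
    (hmap : ∀ (Z W : Type u) [TopologicalSpace Z] [TopologicalSpace W]
      (f : Z → W), Continuous f → Function.Surjective f → QuasiOpenMap f →
      IsClosedMap f → P Z → P W)
    (X : Type u) [TopologicalSpace X] (ff : Set (Set X))
    (hreg : ∀ F ∈ ff, ∃ U : Set X, IsOpen U ∧ F = closure U)
    (hHCP : IsHCP X ff) (hcov : ⋃₀ ff = Set.univ)
    (hP : ∀ F ∈ ff, P F) : P X := by
  classical
  -- Each member of the family is closed.
  have hclosed : ∀ F ∈ ff, IsClosed F := by
    intro F hF
    obtain ⟨U, _, hU⟩ := hreg F hF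
    rw [hU]; exact isClosed_closure
  set Z : ↥ff → Type u := fun i => ↥(i : Set X) with hZ
  let f : (Σ i : ↥ff, Z i) → X := fun z => (z.2 : X)
  have hcont : Continuous f := continuous_sigma fun i => continuous_subtype_val
  have hsurj : Function.Surjective f := by
    intro x
    have : x ∈ ⋃₀ ff := hcov ▸ Set.mem_univ x
    obtain ⟨F, hF, hxF⟩ := this
    exact ⟨⟨⟨F, hF⟩, ⟨x, hxF⟩⟩, rfl⟩
  have hqo : QuasiOpenMap f := by
    intro U hU hne
    obtain ⟨⟨i, y⟩, hzU⟩ := hne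
    have hUi : IsOpen (Sigma.mk i ⁻¹' U) := hU.preimage continuous_sigmaMk
    obtain ⟨O, hO, hOeq⟩ := isOpen_induced_iff.mp hUi
    obtain ⟨V, hV, hFV⟩ := hreg i.1 i.2
    have hyO : (y : X) ∈ O := by
      have : y ∈ Sigma.mk i ⁻¹' U := hzU
      rw [← hOeq] at this; exact this
    have hyF : (y : X) ∈ closure V := hFV ▸ y.2
    have hOV : (O ∩ V).Nonempty := by
      rcases mem_closure_iff.mp hyF O hO hyO with ⟨w, hw⟩
      exact ⟨w, hw⟩
    have hsub : O ∩ V ⊆ f '' U := by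
      intro x hx
      have hxF : x ∈ (i : Set X) := by
        rw [hFV]; exact subset_closure hx.2
      refine ⟨⟨i, ⟨x, hxF⟩⟩, ?_, rfl⟩
      have : (⟨x, hxF⟩ : Z i) ∈ Subtype.val ⁻¹' O := hx.1
      rw [hOeq] at this; exact this
    exact hOV.mono (interior_maximal hsub (hO.inter hV))
  have hclmap : IsClosedMap f := by
    intro C hC
    set S : Set X → Set X := fun Q =>
      {x | ∃ (h : Q ∈ ff) (hx : x ∈ Q), (⟨⟨Q, h⟩, ⟨x, hx⟩⟩ : Σ i : ↥ff, Z i) ∈ C} with hS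
    have hSsub : ∀ Q, S Q ⊆ Q := fun Q x hx => hx.2.1
    have himg : f '' C = ⋃ Q ∈ ff, S Q := by
      ext x
      constructor
      · rintro ⟨⟨⟨Q, hQ⟩, ⟨y, hy⟩⟩, hmem, rfl⟩
        exact Set.mem_biUnion hQ ⟨hQ, hy, hmem⟩
      · intro hx
        obtain ⟨Q, hQ, h, hxQ, hmem⟩ := Set.mem_iUnion₂.mp hx
        exact ⟨⟨⟨Q, h⟩, ⟨x, hxQ⟩⟩, hmem, rfl⟩
    have hSclosed : ∀ Q ∈ ff, IsClosed (S Q) := by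
      intro Q hQ
      have h1 : IsClosed (@Sigma.mk ↥ff Z ⟨Q, hQ⟩ ⁻¹' C) := hC.preimage continuous_sigmaMk
      have h2 : IsClosed ((Subtype.val : Z ⟨Q, hQ⟩ → X) '' (@Sigma.mk ↥ff Z ⟨Q, hQ⟩ ⁻¹' C)) :=
        ((hclosed Q hQ).isClosedEmbedding_subtypeVal.isClosedMap) _ h1
      have : S Q = (Subtype.val : Z ⟨Q, hQ⟩ → X) '' (@Sigma.mk ↥ff Z ⟨Q, hQ⟩ ⁻¹' C) := by
        ext x
        constructor
        · rintro ⟨h, hx, hmem⟩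
          exact ⟨⟨x, hx⟩, hmem, rfl⟩
        · rintro ⟨⟨x, hx⟩, hmem, rfl⟩
          exact ⟨hQ, hx, hmem⟩
      rw [this]; exact h2
    rw [himg]
    have := hHCP S hSsub ff subset_rfl
    have heq : (⋃ Q ∈ ff, closure (S Q)) = ⋃ Q ∈ ff, S Q := by
      refine Set.iUnion₂_congr fun Q hQ => ?_
      exact (hSclosed Q hQ).closure_eq
    rw [heq] at this
    exact closure_eq_iff_isClosed.mp this
  have hPZ : P (Σ i : ↥ff, Z i) := hsum ↥ff Z fun i => hP i.1 i.2
  exact hmap _ X f hcont hsurj hqo hclmap hPZ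
end

section
/- If a T1 regular space X has a hereditarily closure-preserving covering by regular closed subspaces each of which is π-metrizable, then X is π-metrizable. -/
open Set Topology

theorem stmt9 {X : Type*} [TopologicalSpace X] [T1Space X] [RegularSpace X]
    (ff : Set (Set X)) (hreg : ∀ F ∈ ff, ∃ U : Set X, IsOpen U ∧ F = closure U)
    (hHCP : IsHCP X ff) (hcov : ⋃₀ ff = Set.univ)
    (hpm : ∀ F ∈ ff, PiMetrizable F) : PiMetrizable X := by
  classical
  -- Choose the dense open sets and the σ-discrete π-bases of the pieces.
  choose! Uo hUo hUcl using hreg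
  choose! pbF hpb1 hpb2 using hpm
  have hFcl : ∀ F ∈ ff, IsClosed F := by
    intro F hF; rw [hUcl F hF]; exact isClosed_closure
  have hUsub : ∀ F ∈ ff, Uo F ⊆ F := by
    intro F hF
    conv_rhs => rw [hUcl F hF]
    exact subset_closure
  -- Well-order the family; O F is the part of Uo F not covered by earlier members.
  have hwo : IsWellOrder (Set X) WellOrderingRel := WellOrderingRel.isWellOrder
  have hwf : WellFounded (@WellOrderingRel (Set X)) := hwo.toIsWellFounded.wf
  set O : Set X → Set X :=
    fun F => Uo F \ ⋃ G ∈ {G | G ∈ ff ∧ WellOrderingRel G F}, G with hO_def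
  have hDcl : ∀ F : Set X, IsClosed (⋃ G ∈ {G | G ∈ ff ∧ WellOrderingRel G F}, G) := by
    intro F
    have h := hHCP id (fun P => subset_rfl) {G | G ∈ ff ∧ WellOrderingRel G F}
      (fun G hG => hG.1)
    simp only [id_eq] at h
    rw [← closure_eq_iff_isClosed, h]
    exact iUnion₂_congr fun G hG => (hFcl G hG.1).closure_eq
  have hOopen : ∀ F ∈ ff, IsOpen (O F) := fun F hF => (hUo F hF).sdiff (hDcl F)
  have hOsub : ∀ F ∈ ff, O F ⊆ F := fun F hF => diff_subset.trans (hUsub F hF)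
  have hOdisj : ∀ F₁ ∈ ff, ∀ F₂ ∈ ff, ∀ x : X, x ∈ O F₁ → x ∈ O F₂ → F₁ = F₂ := by
    intro F₁ hF₁ F₂ hF₂ x hx₁ hx₂
    rcases trichotomous_of WellOrderingRel F₁ F₂ with h | h | h
    · exact absurd (mem_biUnion (show F₁ ∈ {G | G ∈ ff ∧ WellOrderingRel G F₂}
        from ⟨hF₁, h⟩) (hOsub F₁ hF₁ hx₁)) hx₂.2
    · exact h
    · exact absurd (mem_biUnion (show F₂ ∈ {G | G ∈ ff ∧ WellOrderingRel G F₁}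
        from ⟨hF₂, h⟩) (hOsub F₂ hF₂ hx₂)) hx₁.2
  have open_meets : ∀ W A : Set X, IsOpen W → (W ∩ closure A).Nonempty → (W ∩ A).Nonempty := by
    intro W A hW h
    exact closure_nonempty_iff.mp (h.mono hW.inter_closure)
  -- Shrink each trace of a π-base member inside O F, using regularity.
  have hrex : ∀ F ∈ ff, ∀ n : ℕ, ∀ P ∈ pbF F n, (Subtype.val '' P ∩ O F).Nonempty →
      ∃ B : Set X, IsOpen B ∧ B.Nonempty ∧ closure B ⊆ Subtype.val '' P ∩ O F := by
    intro F hF n P hP hne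
    have hPopen : IsOpen P := ((hpb1 F hF).1 P (mem_iUnion.mpr ⟨n, hP⟩)).1
    obtain ⟨V, hVo, hVeq⟩ := isOpen_induced_iff.mp hPopen
    have himg : Subtype.val '' P = F ∩ V := by
      rw [← hVeq, Subtype.image_preimage_coe]
    have hqopen : IsOpen (Subtype.val '' P ∩ O F) := by
      rw [himg, inter_comm F V, inter_assoc, inter_eq_self_of_subset_right (hOsub F hF)]
      exact hVo.inter (hOopen F hF)
    obtain ⟨y, hy⟩ := hne
    obtain ⟨t, htn, htc, hts⟩ := exists_mem_nhds_isClosed_subset (hqopen.mem_nhds hy)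
    exact ⟨interior t, isOpen_interior, ⟨y, mem_interior_iff_mem_nhds.mpr htn⟩,
      (closure_minimal interior_subset htc).trans hts⟩
  choose! r hro hrne hrcl using hrex
  -- The discreteness of `pbF F n` transferred to X.
  have hdisc : ∀ F ∈ ff, ∀ n : ℕ, ∀ z : X, ∃ V : Set X, IsOpen V ∧ z ∈ V ∧
      ∀ P₁ ∈ pbF F n, ∀ P₂ ∈ pbF F n, (Subtype.val '' P₁ ∩ V).Nonempty →
        (Subtype.val '' P₂ ∩ V).Nonempty → P₁ = P₂ := by
    intro F hF n z
    by_cases hz : z ∈ F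
    · obtain ⟨Uh, hUhn, hUhs⟩ := hpb2 F hF n ⟨z, hz⟩
      obtain ⟨V₀, hV₀n, hpre⟩ := (mem_nhds_subtype F ⟨z, hz⟩ Uh).mp hUhn
      refine ⟨interior V₀, isOpen_interior, mem_interior_iff_mem_nhds.mpr hV₀n, ?_⟩
      rintro P₁ hP₁ P₂ hP₂ ⟨w₁, ⟨p₁, hp₁, rfl⟩, hw₁V⟩ ⟨w₂, ⟨p₂, hp₂, rfl⟩, hw₂V⟩
      exact hUhs ⟨hP₁, ⟨p₁, hp₁, hpre (show (p₁ : X) ∈ V₀ from interior_subset hw₁V)⟩⟩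
        ⟨hP₂, ⟨p₂, hp₂, hpre (show (p₂ : X) ∈ V₀ from interior_subset hw₂V)⟩⟩
    · refine ⟨Fᶜ, (hFcl F hF).isOpen_compl, hz, ?_⟩
      rintro P₁ hP₁ P₂ hP₂ ⟨w₁, ⟨p₁, hp₁, rfl⟩, hw₁⟩ _
      exact absurd p₁.2 hw₁
  -- Unions of closures of shrunk members over one F are closed.
  have hLmain : ∀ F ∈ ff, ∀ n : ℕ, ∀ T : Set (Set (↥F)),
      (∀ P ∈ T, P ∈ pbF F n ∧ (Subtype.val '' P ∩ O F).Nonempty) →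
      closure (⋃ P ∈ T, closure (r F n P)) ⊆ ⋃ P ∈ T, closure (r F n P) := by
    intro F hF n T hT z hz
    obtain ⟨V, hVo, hzV, huniq⟩ := hdisc F hF n z
    obtain ⟨w, hwV, hwA⟩ := mem_closure_iff.mp hz V hVo hzV
    obtain ⟨P₀, hP₀, hw₀⟩ := mem_iUnion₂.mp hwA
    have hr₀sub : r F n P₀ ⊆ Subtype.val '' P₀ :=
      subset_closure.trans ((hrcl F hF n P₀ (hT P₀ hP₀).1 (hT P₀ hP₀).2).trans
        inter_subset_left)
    have hVr₀ : (V ∩ r F n P₀).Nonempty := open_meets V _ hVo ⟨w, hwV, hw₀⟩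
    refine mem_biUnion hP₀ ?_
    rw [mem_closure_iff]
    intro W hWo hzW
    obtain ⟨w₁, hw₁WV, hw₁A⟩ := mem_closure_iff.mp hz (W ∩ V) (hWo.inter hVo) ⟨hzW, hzV⟩
    obtain ⟨P₁, hP₁, hw₁⟩ := mem_iUnion₂.mp hw₁A
    have hWVr₁ : (W ∩ V ∩ r F n P₁).Nonempty :=
      open_meets _ _ (hWo.inter hVo) ⟨w₁, hw₁WV, hw₁⟩
    have hr₁sub : r F n P₁ ⊆ Subtype.val '' P₁ :=
      subset_closure.trans ((hrcl F hF n P₁ (hT P₁ hP₁).1 (hT P₁ hP₁).2).trans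
        inter_subset_left)
    have hP01 : P₀ = P₁ := by
      apply huniq P₀ (hT P₀ hP₀).1 P₁ (hT P₁ hP₁).1
      · exact hVr₀.mono fun a ha => ⟨hr₀sub ha.2, ha.1⟩
      · exact hWVr₁.mono fun a ha => ⟨hr₁sub ha.2, ha.1.2⟩
    obtain ⟨a, ha⟩ := hWVr₁
    exact ⟨a, ha.1.1, by rw [hP01]; exact ha.2⟩
  -- The candidate σ-discrete π-base.
  refine ⟨fun n => {B | ∃ F, F ∈ ff ∧ ∃ P, P ∈ pbF F n ∧
      (Subtype.val '' P ∩ O F).Nonempty ∧ B = r F n P}, ⟨?_, ?_⟩, ?_⟩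
  · rintro B hB
    obtain ⟨n, hBn⟩ := mem_iUnion.mp hB
    obtain ⟨F, hF, P, hP, hne, rfl⟩ := hBn
    exact ⟨hro F hF n P hP hne, hrne F hF n P hP hne⟩
  · -- π-base property
    intro W hWo hWne
    obtain ⟨x, hxW⟩ := hWne
    have hx' : x ∈ ⋃₀ ff := by rw [hcov]; exact mem_univ x
    obtain ⟨F₀, hF₀, hxF₀⟩ := hx'
    have hS0 : (W ∩ Uo F₀).Nonempty := by
      have hxcl : x ∈ closure (Uo F₀) := by rw [← hUcl F₀ hF₀]; exact hxF₀
      exact mem_closure_iff.mp hxcl W hWo hxW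
    have hSne : {F | F ∈ ff ∧ (W ∩ Uo F).Nonempty}.Nonempty := ⟨F₀, hF₀, hS0⟩
    set Fm := hwf.min {F | F ∈ ff ∧ (W ∩ Uo F).Nonempty} hSne with hFm_def
    have hFmS : Fm ∈ {F | F ∈ ff ∧ (W ∩ Uo F).Nonempty} :=
      hwf.min_mem {F | F ∈ ff ∧ (W ∩ Uo F).Nonempty} hSne
    have hWO : (W ∩ O Fm).Nonempty := by
      rcases eq_empty_or_nonempty (W ∩ O Fm) with hemp | h
      · exfalso
        obtain ⟨z, hzW, hzU⟩ := hFmS.2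
        have hzD : z ∈ ⋃ G ∈ {G | G ∈ ff ∧ WellOrderingRel G Fm}, G := by
          by_contra hzD
          exact (eq_empty_iff_forall_notMem.mp hemp z) ⟨hzW, hzU, hzD⟩
        obtain ⟨G, hG, hzG⟩ := mem_iUnion₂.mp hzD
        have hzcl : z ∈ closure (Uo G) := by rw [← hUcl G hG.1]; exact hzG
        obtain ⟨w, hw⟩ := mem_closure_iff.mp hzcl (W ∩ Uo Fm)
          (hWo.inter (hUo Fm hFmS.1)) ⟨hzW, hzU⟩
        exact hwf.not_lt_min _ (⟨hG.1, ⟨w, hw.1.1, hw.2⟩⟩ :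
          G ∈ {F | F ∈ ff ∧ (W ∩ Uo F).Nonempty}) hG.2
      · exact h
    obtain ⟨z, hzW, hzO⟩ := hWO
    have hzF : z ∈ Fm := hOsub Fm hFmS.1 hzO
    have hGo : IsOpen (Subtype.val ⁻¹' (W ∩ O Fm) : Set (↥Fm)) :=
      (hWo.inter (hOopen Fm hFmS.1)).preimage continuous_subtype_val
    have hGne : (Subtype.val ⁻¹' (W ∩ O Fm) : Set (↥Fm)).Nonempty := ⟨⟨z, hzF⟩, hzW, hzO⟩
    obtain ⟨P, hPU, hPsub⟩ := (hpb1 Fm hFmS.1).2 _ hGo hGne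
    obtain ⟨n, hPn⟩ := mem_iUnion.mp hPU
    have hPne : P.Nonempty := ((hpb1 Fm hFmS.1).1 P hPU).2
    have hvalsub : Subtype.val '' P ⊆ W ∩ O Fm := by
      rintro _ ⟨p, hp, rfl⟩; exact hPsub hp
    obtain ⟨p, hp⟩ := hPne
    have hqne : (Subtype.val '' P ∩ O Fm).Nonempty :=
      ⟨(p : X), ⟨p, hp, rfl⟩, (hvalsub ⟨p, hp, rfl⟩).2⟩
    refine ⟨r Fm n P, mem_iUnion.mpr ⟨n, ⟨Fm, hFmS.1, P, hPn, hqne, rfl⟩⟩, ?_⟩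
    exact (subset_closure.trans (hrcl Fm hFmS.1 n P hPn hqne)).trans
      (inter_subset_left.trans (hvalsub.trans inter_subset_left))
  · -- σ-discreteness
    intro n x
    set S : Set X → Set X := fun A => A ∩ ⋃ P ∈ {P : Set (↥A) | P ∈ pbF A n ∧
      (Subtype.val '' P ∩ O A).Nonempty ∧ x ∉ closure (r A n P)}, closure (r A n P)
      with hS_def
    have hkey := hHCP S (fun P => inter_subset_left) ff subset_rfl
    have hCsub : ∀ F ∈ ff, (⋃ P ∈ {P : Set (↥F) | P ∈ pbF F n ∧
        (Subtype.val '' P ∩ O F).Nonempty ∧ x ∉ closure (r F n P)},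
        closure (r F n P)) ⊆ F := by
      intro F hF
      refine iUnion₂_subset fun P hP => ?_
      exact (hrcl F hF n P hP.1 hP.2.1).trans (inter_subset_right.trans (hOsub F hF))
    have hSF : ∀ F ∈ ff, S F = ⋃ P ∈ {P : Set (↥F) | P ∈ pbF F n ∧
        (Subtype.val '' P ∩ O F).Nonempty ∧ x ∉ closure (r F n P)}, closure (r F n P) :=
      fun F hF => inter_eq_self_of_subset_right (hCsub F hF)
    have hxnot : x ∉ closure (⋃ F ∈ ff, S F) := by
      rw [hkey]
      intro hx
      obtain ⟨F, hF, hxF⟩ := mem_iUnion₂.mp hx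
      rw [hSF F hF] at hxF
      have hx2 := hLmain F hF n _ (fun P hP => ⟨hP.1, hP.2.1⟩) hxF
      obtain ⟨P₀, hP₀, hxP₀⟩ := mem_iUnion₂.mp hx2
      exact hP₀.2.2 hxP₀
    refine ⟨(closure (⋃ F ∈ ff, S F))ᶜ, (isClosed_closure.isOpen_compl).mem_nhds hxnot, ?_⟩
    have key : ∀ B, (∃ F, F ∈ ff ∧ ∃ P, P ∈ pbF F n ∧
        (Subtype.val '' P ∩ O F).Nonempty ∧ B = r F n P) →
        (B ∩ (closure (⋃ F ∈ ff, S F))ᶜ).Nonempty →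
        ∃ F, F ∈ ff ∧ ∃ P, P ∈ pbF F n ∧ (Subtype.val '' P ∩ O F).Nonempty ∧
          B = r F n P ∧ x ∈ Subtype.val '' P ∩ O F := by
      rintro B ⟨F, hF, P, hP, hne, rfl⟩ hmeet
      refine ⟨F, hF, P, hP, hne, rfl, ?_⟩
      have hxcl : x ∈ closure (r F n P) := by
        by_contra hxB
        have hsub : r F n P ⊆ closure (⋃ F' ∈ ff, S F') := by
          refine subset_closure.trans ?_
          have h1 : closure (r F n P) ⊆ S F := by
            rw [hSF F hF]
            exact subset_iUnion₂ (s := fun P _ => closure (r F n P)) P ⟨hP, hne, hxB⟩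
          exact h1.trans ((subset_biUnion_of_mem hF).trans subset_closure)
        obtain ⟨w, hwB, hwc⟩ := hmeet
        exact hwc (hsub hwB)
      exact hrcl F hF n P hP hne hxcl
    intro B₁ hB₁ B₂ hB₂
    obtain ⟨F₁, hF₁, P₁, hP₁, hne₁, hBeq₁, hx₁⟩ := key B₁ hB₁.1 hB₁.2
    obtain ⟨F₂, hF₂, P₂, hP₂, hne₂, hBeq₂, hx₂⟩ := key B₂ hB₂.1 hB₂.2
    have hFeq : F₁ = F₂ := hOdisj F₁ hF₁ F₂ hF₂ x hx₁.2 hx₂.2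
    subst hFeq
    obtain ⟨V, hVo, hxV, huniq⟩ := hdisc F₁ hF₁ n x
    have hPeq : P₁ = P₂ := huniq P₁ hP₁ P₂ hP₂ ⟨x, hx₁.1, hxV⟩ ⟨x, hx₂.1, hxV⟩
    rw [hBeq₁, hBeq₂, hPeq]
end

section
/- A T1 regular space X is π-metrizable if and only if X is almost σ-paracompact and locally π-metrizable. -/
open Set Topology

/-- Almost σ-paracompact: every open cover has a σ-locally finite open
refinement whose union is dense. -/
def AlmostSigmaParacompact (X : Type*) [TopologicalSpace X] : Prop :=
  ∀ uu : Set (Set X), (∀ U ∈ uu, IsOpen U) → ⋃₀ uu = Set.univ →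
    ∃ vv : ℕ → Set (Set X),
      (∀ n, ∀ V ∈ vv n, IsOpen V) ∧ (∀ n, IsLocFinFam X (vv n)) ∧
      (∀ n, ∀ V ∈ vv n, ∃ U ∈ uu, V ⊆ U) ∧ Dense (⋃ n, ⋃₀ vv n)

private lemma stmt10_locfin_open {X : Type*} [TopologicalSpace X] {F : Set (Set X)}
    (hlf : IsLocFinFam X F) (x : X) :
    ∃ U : Set X, IsOpen U ∧ x ∈ U ∧ {P ∈ F | (P ∩ U).Nonempty}.Finite := by
  obtain ⟨U, hU, hfin⟩ := hlf x
  obtain ⟨O, hOU, hO, hxO⟩ := mem_nhds_iff.1 hU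
  exact ⟨O, hO, hxO, hfin.subset fun P hP =>
    ⟨hP.1, hP.2.mono (inter_subset_inter_right _ hOU)⟩⟩

private lemma stmt10_reg {X : Type*} [TopologicalSpace X] [RegularSpace X] {x : X} {O : Set X}
    (hO : IsOpen O) (hx : x ∈ O) : ∃ W : Set X, IsOpen W ∧ x ∈ W ∧ closure W ⊆ O := by
  obtain ⟨V, hV, hVc, hVO⟩ := exists_mem_nhds_isClosed_subset (hO.mem_nhds hx)
  exact ⟨interior V, isOpen_interior, mem_interior_iff_mem_nhds.2 hV,
    (closure_minimal interior_subset hVc).trans hVO⟩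

private lemma stmt10_univ {X : Type*} [TopologicalSpace X] (h : PiMetrizable X) :
    PiMetrizable (univ : Set X) := by
  obtain ⟨pb, ⟨hmem, hbase⟩, hdisc⟩ := h
  refine ⟨fun n => (fun P => (Subtype.val ⁻¹' P : Set (univ : Set X))) '' pb n, ⟨?_, ?_⟩, ?_⟩
  · rintro P' hP'
    rw [mem_iUnion] at hP'
    obtain ⟨n, P, hP, rfl⟩ := hP'
    have h1 := hmem P (mem_iUnion.2 ⟨n, hP⟩)
    exact ⟨h1.1.preimage continuous_subtype_val,
      by obtain ⟨y, hy⟩ := h1.2; exact ⟨⟨y, mem_univ y⟩, hy⟩⟩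
  · intro O hO hOne
    obtain ⟨O', hO', rfl⟩ := isOpen_induced_iff.1 hO
    have hO'ne : O'.Nonempty := by obtain ⟨a, ha⟩ := hOne; exact ⟨a.1, ha⟩
    obtain ⟨P, hP, hsub⟩ := hbase O' hO' hO'ne
    obtain ⟨n, hn⟩ := mem_iUnion.1 hP
    exact ⟨_, mem_iUnion.2 ⟨n, ⟨P, hn, rfl⟩⟩, preimage_mono hsub⟩
  · intro n a
    obtain ⟨NX, hNX, hsub⟩ := hdisc n a.1
    refine ⟨Subtype.val ⁻¹' NX, ?_, ?_⟩
    · rw [nhds_induced]; exact Filter.preimage_mem_comap hNX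
    · rintro B1 ⟨⟨P, hP, rfl⟩, hne1⟩ B2 ⟨⟨Q, hQ, rfl⟩, hne2⟩
      have hPQ : P = Q := by
        apply hsub
        · exact ⟨hP, by obtain ⟨b, h1, h2⟩ := hne1; exact ⟨b.1, h1, h2⟩⟩
        · exact ⟨hQ, by obtain ⟨b, h1, h2⟩ := hne2; exact ⟨b.1, h1, h2⟩⟩
      rw [hPQ]

private lemma stmt10_transfer {X : Type*} [TopologicalSpace X] (U : Set X) (hU : IsOpen U)
    (h : PiMetrizable U) :
    ∃ qb : ℕ → Set (Set X),
      (∀ m, ∀ B ∈ qb m, IsOpen B ∧ B.Nonempty ∧ B ⊆ U) ∧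
      (∀ O : Set X, IsOpen O → O.Nonempty → O ⊆ U → ∃ m, ∃ B ∈ qb m, B ⊆ O) ∧
      (∀ m, ∀ z ∈ U, ∃ N ∈ 𝓝 z, {B ∈ qb m | (B ∩ N).Nonempty}.Subsingleton) := by
  obtain ⟨pb, ⟨hmem, hbase⟩, hdisc⟩ := h
  refine ⟨fun m => (fun B0 : Set U => (Subtype.val '' B0 : Set X)) '' pb m, ?_, ?_, ?_⟩
  · rintro m B ⟨B0, hB0, rfl⟩
    have h1 := hmem B0 (mem_iUnion.2 ⟨m, hB0⟩)
    refine ⟨hU.isOpenMap_subtype_val _ h1.1, h1.2.image _, ?_⟩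
    rintro x ⟨b, _, rfl⟩; exact b.2
  · intro O hO hOne hOU
    have hO' : IsOpen ((Subtype.val : U → X) ⁻¹' O) := hO.preimage continuous_subtype_val
    have hOne' : ((Subtype.val : U → X) ⁻¹' O).Nonempty := by
      obtain ⟨y, hy⟩ := hOne; exact ⟨⟨y, hOU hy⟩, hy⟩
    obtain ⟨B0, hB0, hsub⟩ := hbase _ hO' hOne'
    obtain ⟨m, hm⟩ := mem_iUnion.1 hB0
    refine ⟨m, _, ⟨B0, hm, rfl⟩, ?_⟩
    rintro x ⟨b, hb, rfl⟩; exact hsub hb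
  · intro m z hz
    obtain ⟨N0, hN0, hsub⟩ := hdisc m ⟨z, hz⟩
    rw [nhds_induced] at hN0
    obtain ⟨NX, hNX, hpre⟩ := hN0
    refine ⟨NX, hNX, ?_⟩
    rintro B1 ⟨⟨B0, hB0, rfl⟩, hne1⟩ B2 ⟨⟨B0', hB0', rfl⟩, hne2⟩
    have e : B0 = B0' := by
      apply hsub
      · refine ⟨hB0, ?_⟩
        obtain ⟨w, ⟨b, hb, rfl⟩, hw2⟩ := hne1
        exact ⟨b, hb, hpre hw2⟩
      · refine ⟨hB0', ?_⟩
        obtain ⟨w, ⟨b, hb, rfl⟩, hw2⟩ := hne2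
        exact ⟨b, hb, hpre hw2⟩
    rw [e]

private noncomputable def stmt10_step {X : Type*} [TopologicalSpace X] {I : Type*}
    (r : I → I → Prop) (idx : I → Set X) (xs : I → X) (kf : I → ℕ) (D : Set X)
    (P : I) (prev : ∀ Q : I, r Q P → Set X) : Set X :=
  @dite _ (∃ W : Set X, IsOpen W ∧ xs P ∈ W ∧ closure W ⊆ idx P ∧
      closure W ∩ (D \ {xs P}) = ∅ ∧
      ∀ (Q : I) (hr : r Q P), kf Q = kf P → closure W ∩ closure (prev Q hr) = ∅)
    (Classical.propDecidable _) (fun h => h.choose) (fun _ => ∅)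

private noncomputable def stmt10_V {X : Type*} [TopologicalSpace X] {I : Type*}
    {r : I → I → Prop} (wf : WellFounded r) (idx : I → Set X) (xs : I → X) (kf : I → ℕ)
    (D : Set X) : I → Set X :=
  wf.fix (stmt10_step r idx xs kf D)

private lemma stmt10_V_eq {X : Type*} [TopologicalSpace X] {I : Type*}
    {r : I → I → Prop} (wf : WellFounded r) (idx : I → Set X) (xs : I → X) (kf : I → ℕ)
    (D : Set X) (P : I) :
    stmt10_V wf idx xs kf D P
      = stmt10_step r idx xs kf D P (fun Q _ => stmt10_V wf idx xs kf D Q) :=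
  wf.fix_eq _ P

private lemma stmt10_lemA {X : Type*} [TopologicalSpace X] [T1Space X] [RegularSpace X]
    (F : Set (Set X)) (hop : ∀ P ∈ F, IsOpen P ∧ P.Nonempty) (hlf : IsLocFinFam X F) :
    ∃ G : ℕ → Set (Set X),
      (∀ k, IsDiscreteFam X (G k)) ∧
      (∀ k, ∀ W ∈ G k, IsOpen W ∧ W.Nonempty) ∧
      (∀ P ∈ F, ∃ k, ∃ W ∈ G k, W ⊆ P) := by
  classical
  have hxs : ∀ P : {P : Set X // P ∈ F}, ∃ x, x ∈ (P : Set X) := fun P => (hop P P.2).2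
  choose xs hxsm using hxs
  set D : Set X := Set.range xs with hD
  -- every subset of D is closed
  have hDcl : ∀ S ⊆ D, IsClosed S := by
    intro S hS
    rw [← closure_subset_iff_isClosed]
    intro y hy
    obtain ⟨U, hUo, hyU, hfin⟩ := stmt10_locfin_open hlf y
    have hfinT : ({P : {P : Set X // P ∈ F} | ((P : Set X) ∩ U).Nonempty}).Finite := by
      have he : ({P : {P : Set X // P ∈ F} | ((P : Set X) ∩ U).Nonempty})
          = Subtype.val ⁻¹' {P ∈ F | (P ∩ U).Nonempty} := by
        ext P; simp only [mem_setOf_eq, mem_preimage, mem_sep_iff]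
        exact ⟨fun hh => ⟨P.2, hh⟩, fun hh => hh.2⟩
      rw [he]
      exact hfin.preimage Subtype.coe_injective.injOn
    have hfinSU : (S ∩ U).Finite := by
      apply (hfinT.image xs).subset
      rintro z ⟨hzS, hzU⟩
      obtain ⟨P, rfl⟩ := hS hzS
      exact ⟨P, ⟨xs P, hxsm P, hzU⟩, rfl⟩
    have hyc : y ∈ closure (S ∩ U) := by
      rw [mem_closure_iff] at hy ⊢
      intro o ho hyo
      obtain ⟨z, ⟨hzo, hzU⟩, hzS⟩ := hy (o ∩ U) (ho.inter hUo) ⟨hyo, hyU⟩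
      exact ⟨z, hzo, hzS, hzU⟩
    exact (hfinSU.isClosed.closure_subset hyc).1
  -- split into countably many pieces on which xs is injective
  have hctb : ∀ z : X, ∃ g : {P : {P : Set X // P ∈ F} // xs P = z} → ℕ, Function.Injective g := by
    intro z
    obtain ⟨U, hUo, hzU, hfin⟩ := stmt10_locfin_open hlf z
    have hfibfin : {P : {P : Set X // P ∈ F} | xs P = z}.Finite := by
      apply (hfin.preimage Subtype.coe_injective.injOn).subset
      intro P hP
      refine ⟨P.2, ⟨xs P, hxsm P, ?_⟩⟩
      rw [hP]; exact hzU
    have : Finite {P : {P : Set X // P ∈ F} // xs P = z} := hfibfin.to_subtype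
    exact exists_injective_nat _
  choose g hg using hctb
  set kf : {P : Set X // P ∈ F} → ℕ := fun P => g (xs P) ⟨P, rfl⟩ with hkfdef
  have hkf : ∀ P Q : {P : Set X // P ∈ F}, xs P = xs Q → kf P = kf Q → P = Q := by
    have haux : ∀ (z : X) (P : {P : Set X // P ∈ F}) (h : xs P = z), kf P = g z ⟨P, h⟩ := by
      intro z P h; subst h; rfl
    intro P Q hxy hk
    rw [haux (xs Q) P hxy, haux (xs Q) Q rfl] at hk
    exact Subtype.ext_iff.1 (hg (xs Q) hk)
  -- well order
  letI : IsWellOrder {P : Set X // P ∈ F} WellOrderingRel := WellOrderingRel.isWellOrder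
  have wf : WellFounded (@WellOrderingRel {P : Set X // P ∈ F}) :=
    (WellOrderingRel.isWellOrder).toIsWellFounded.wf
  set V : {P : Set X // P ∈ F} → Set X :=
    stmt10_V wf (fun P => (P : Set X)) xs kf D with hVdef
  have key : ∀ P : {P : Set X // P ∈ F}, IsOpen (V P) ∧ xs P ∈ V P ∧
      closure (V P) ⊆ (P : Set X) ∧ closure (V P) ∩ (D \ {xs P}) = ∅ ∧
      ∀ Q, WellOrderingRel Q P → kf Q = kf P → closure (V P) ∩ closure (V Q) = ∅ := by
    intro P0
    refine wf.induction (C := fun P => IsOpen (V P) ∧ xs P ∈ V P ∧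
      closure (V P) ⊆ (P : Set X) ∧ closure (V P) ∩ (D \ {xs P}) = ∅ ∧
      ∀ Q, WellOrderingRel Q P → kf Q = kf P → closure (V P) ∩ closure (V Q) = ∅) P0 ?_
    clear P0
    intro P IH
    have hCcl : IsClosed (⋃ Q : {Q : {P : Set X // P ∈ F} // WellOrderingRel Q P ∧ kf Q = kf P},
        closure (V ↑Q)) := by
      apply LocallyFinite.isClosed_iUnion
      · intro x
        obtain ⟨U, hUo, hxU, hfin⟩ := stmt10_locfin_open hlf x
        refine ⟨U, hUo.mem_nhds hxU, ?_⟩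
        have hsb : {Q : {Q : {P : Set X // P ∈ F} // WellOrderingRel Q P ∧ kf Q = kf P} |
            (closure (V ↑Q) ∩ U).Nonempty}
            ⊆ (fun Q : {Q : {P : Set X // P ∈ F} // WellOrderingRel Q P ∧ kf Q = kf P} =>
                ((Q : {P : Set X // P ∈ F}) : Set X)) ⁻¹' {P' ∈ F | (P' ∩ U).Nonempty} := by
          rintro Q hQ
          refine ⟨(Q : {P : Set X // P ∈ F}).2, ?_⟩
          exact hQ.mono (inter_subset_inter_left _ (IH Q.1 Q.2.1).2.2.1)
        exact ((hfin.preimage ((Subtype.coe_injective.comp Subtype.coe_injective)).injOn).subset hsb)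
      · intro Q; exact isClosed_closure
    have hxnC : xs P ∉ ⋃ Q : {Q : {P : Set X // P ∈ F} // WellOrderingRel Q P ∧ kf Q = kf P},
        closure (V ↑Q) := by
      rw [mem_iUnion]
      rintro ⟨⟨Q, hr, hk⟩, hmem⟩
      by_cases hxe : xs P = xs Q
      · have hPQ : P = Q := hkf P Q hxe hk.symm
        subst hPQ
        exact irrefl_of _ P hr
      · have hmem2 : xs P ∈ D \ {xs Q} := ⟨mem_range_self P, hxe⟩
        have h4 := (IH Q hr).2.2.2.1
        rw [eq_empty_iff_forall_notMem] at h4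
        exact h4 (xs P) ⟨hmem, hmem2⟩
    have hOo : IsOpen ((P : Set X) ∩ (⋃ Q : {Q : {P : Set X // P ∈ F} //
        WellOrderingRel Q P ∧ kf Q = kf P}, closure (V ↑Q))ᶜ ∩ (D \ {xs P})ᶜ) :=
      ((hop P P.2).1.inter hCcl.isOpen_compl).inter (hDcl _ diff_subset).isOpen_compl
    have hxO : xs P ∈ (P : Set X) ∩ (⋃ Q : {Q : {P : Set X // P ∈ F} //
        WellOrderingRel Q P ∧ kf Q = kf P}, closure (V ↑Q))ᶜ ∩ (D \ {xs P})ᶜ :=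
      ⟨⟨hxsm P, hxnC⟩, fun hc => hc.2 rfl⟩
    obtain ⟨W, hWo, hxW, hWc⟩ := stmt10_reg hOo hxO
    have hex : ∃ W : Set X, IsOpen W ∧ xs P ∈ W ∧ closure W ⊆ (P : Set X) ∧
        closure W ∩ (D \ {xs P}) = ∅ ∧
        ∀ (Q : {P : Set X // P ∈ F}) (hr : WellOrderingRel Q P), kf Q = kf P →
          closure W ∩ closure (V Q) = ∅ := by
      refine ⟨W, hWo, hxW, fun z hz => (hWc hz).1.1, ?_, ?_⟩
      · rw [eq_empty_iff_forall_notMem]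
        rintro z ⟨hz1, hz2⟩
        exact (hWc hz1).2 hz2
      · intro Q hr hk
        rw [eq_empty_iff_forall_notMem]
        rintro z ⟨hz1, hz2⟩
        exact (hWc hz1).1.2 (mem_iUnion.2 ⟨⟨Q, hr, hk⟩, hz2⟩)
    have hVP : V P = hex.choose := (stmt10_V_eq wf _ xs kf D P).trans (dif_pos hex)
    obtain ⟨h1, h2, h3, h4, h5⟩ := hex.choose_spec
    rw [← hVP] at h1 h2 h3 h4 h5
    exact ⟨h1, h2, h3, h4, fun Q hr hk => h5 Q hr hk⟩
  -- build the answer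
  refine ⟨fun k => {W | ∃ P : {P : Set X // P ∈ F}, kf P = k ∧ V P = W}, ?_, ?_, ?_⟩
  · intro k x
    obtain ⟨U, hUo, hxU, hfin⟩ := stmt10_locfin_open hlf x
    set Bad := {P : {P : Set X // P ∈ F} | kf P = k ∧ (V P ∩ U).Nonempty ∧ x ∉ closure (V P)}
      with hBad
    have hBadfin : Bad.Finite := by
      apply (hfin.preimage Subtype.coe_injective.injOn).subset
      rintro P ⟨_, hne, _⟩
      exact ⟨P.2, hne.mono (inter_subset_inter_left _
        (subset_closure.trans (key P).2.2.1))⟩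
    have hNcl : IsClosed (⋃ P ∈ Bad, closure (V P)) :=
      hBadfin.isClosed_biUnion fun _ _ => isClosed_closure
    have hxN : x ∈ U \ ⋃ P ∈ Bad, closure (V P) := by
      refine ⟨hxU, ?_⟩
      rw [mem_iUnion₂]
      rintro ⟨P, hP, hmem⟩
      exact hP.2.2 hmem
    refine ⟨U \ ⋃ P ∈ Bad, closure (V P), (hUo.sdiff hNcl).mem_nhds hxN, ?_⟩
    rintro W1 ⟨⟨P1, hk1, rfl⟩, hne1⟩ W2 ⟨⟨P2, hk2, rfl⟩, hne2⟩
    have hcl : ∀ (P : {P : Set X // P ∈ F}), kf P = k →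
        (V P ∩ (U \ ⋃ P ∈ Bad, closure (V P))).Nonempty → x ∈ closure (V P) := by
      intro P hk hne
      by_contra hx
      obtain ⟨z, hz1, hz2, hz3⟩ := hne
      have hPBad : P ∈ Bad := ⟨hk, ⟨z, hz1, hz2⟩, hx⟩
      exact hz3 (mem_biUnion hPBad (subset_closure hz1))
    have hx1 := hcl P1 hk1 hne1
    have hx2 := hcl P2 hk2 hne2
    have hPP : P1 = P2 := by
      rcases trichotomous_of (@WellOrderingRel {P : Set X // P ∈ F}) P1 P2 with h | h | h
      · have h5 := (key P2).2.2.2.2 P1 h (hk1.trans hk2.symm)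
        rw [eq_empty_iff_forall_notMem] at h5
        exact absurd ⟨hx2, hx1⟩ (h5 x)
      · exact h
      · have h5 := (key P1).2.2.2.2 P2 h (hk2.trans hk1.symm)
        rw [eq_empty_iff_forall_notMem] at h5
        exact absurd ⟨hx1, hx2⟩ (h5 x)
    rw [hPP]
  · rintro k W ⟨P, _, rfl⟩
    exact ⟨(key P).1, ⟨xs P, (key P).2.1⟩⟩
  · intro P hP
    exact ⟨kf ⟨P, hP⟩, V ⟨P, hP⟩, ⟨⟨P, hP⟩, rfl, rfl⟩,
      subset_closure.trans (key ⟨P, hP⟩).2.2.1⟩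

theorem stmt10 {X : Type*} [TopologicalSpace X] [T1Space X] [RegularSpace X] :
    PiMetrizable X ↔
      AlmostSigmaParacompact X ∧
      (∀ x : X, ∃ U : Set X, IsOpen U ∧ x ∈ U ∧ PiMetrizable U) := by
  constructor
  · intro h
    refine ⟨?_, fun x => ⟨univ, isOpen_univ, mem_univ x, stmt10_univ h⟩⟩
    obtain ⟨pb, ⟨hmem, hbase⟩, hdisc⟩ := h
    intro uu huo hucov
    refine ⟨fun n => {P ∈ pb n | ∃ U ∈ uu, P ⊆ U}, ?_, ?_, ?_, ?_⟩
    · intro n V hV; exact (hmem V (mem_iUnion.2 ⟨n, hV.1⟩)).1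
    · intro n x
      obtain ⟨U, hU, hsub⟩ := hdisc n x
      exact ⟨U, hU, (hsub.anti (fun P hP => ⟨hP.1.1, hP.2⟩)).finite⟩
    · intro n V hV; exact hV.2
    · rw [dense_iff_inter_open]
      intro O hO hOne
      obtain ⟨z, hz⟩ := hOne
      have hzu : z ∈ ⋃₀ uu := by rw [hucov]; exact mem_univ z
      obtain ⟨U, hUu, hzU⟩ := hzu
      obtain ⟨P, hP, hPsub⟩ := hbase (O ∩ U) (hO.inter (huo U hUu)) ⟨z, hz, hzU⟩
      obtain ⟨n, hn⟩ := mem_iUnion.1 hP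
      obtain ⟨p, hp⟩ := (hmem P hP).2
      exact ⟨p, (hPsub hp).1, mem_iUnion.2
        ⟨n, ⟨P, ⟨hn, U, hUu, hPsub.trans inter_subset_right⟩, hp⟩⟩⟩
  · rintro ⟨hA, hloc⟩
    by_cases hXne : Nonempty X
    case neg =>
      refine ⟨fun _ => ∅, ⟨?_, ?_⟩, ?_⟩
      · intro P hP; simp at hP
      · intro O hO hOne; exact absurd ⟨hOne.some⟩ hXne
      · intro n x; exact absurd ⟨x⟩ hXne
    choose Ux hUo hUmem hUpm using hloc
    have hT : ∀ x : X, ∃ Tx : Set X, IsOpen Tx ∧ x ∈ Tx ∧ closure Tx ⊆ Ux x :=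
      fun x => stmt10_reg (hUo x) (hUmem x)
    choose T hTo hTmem hTcl using hT
    obtain ⟨vv, hvo, hvlf, hvref, hvdense⟩ := hA (Set.range T)
      (by rintro U ⟨x, rfl⟩; exact hTo x)
      (by
        apply eq_univ_of_forall
        intro z
        exact ⟨T z, ⟨z, rfl⟩, hTmem z⟩)
    have hxi : ∀ V : Set X, ∃ x : X, ((∃ n, V ∈ vv n) → V ⊆ T x) := by
      intro V
      by_cases h : ∃ n, V ∈ vv n
      · obtain ⟨n, hn⟩ := h
        obtain ⟨U', ⟨x, rfl⟩, hsub⟩ := hvref n V hn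
        exact ⟨x, fun _ => hsub⟩
      · exact ⟨Classical.arbitrary X, fun hh => absurd hh h⟩
    choose xi hxiT using hxi
    have hq := fun x : X => stmt10_transfer (Ux x) (hUo x) (hUpm x)
    choose qb hq1 hq2 hq3 using hq
    have hVU : ∀ n, ∀ V ∈ vv n, closure V ⊆ Ux (xi V) :=
      fun n V hV => (closure_mono (hxiT V ⟨n, hV⟩)).trans (hTcl (xi V))
    have hWop : ∀ n m, ∀ B ∈ {B : Set X | ∃ V ∈ vv n, B ∈ qb (xi V) m ∧ B ⊆ V},
        IsOpen B ∧ B.Nonempty := by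
      rintro n m B ⟨V, hVvv, hBq, hBV⟩
      have h1 := hq1 (xi V) m B hBq
      exact ⟨h1.1, h1.2.1⟩
    have hWlf : ∀ n m, IsLocFinFam X {B : Set X | ∃ V ∈ vv n, B ∈ qb (xi V) m ∧ B ⊆ V} := by
      intro n m z
      obtain ⟨U0, hU0o, hzU0, hAfin⟩ := stmt10_locfin_open (hvlf n) z
      have hkey : ∀ V ∈ {P ∈ vv n | (P ∩ U0).Nonempty}, ∃ N, N ∈ 𝓝 z ∧
          {B | B ∈ qb (xi V) m ∧ B ⊆ V ∧ (B ∩ N).Nonempty}.Subsingleton := by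
        intro V hV
        by_cases hzU : z ∈ Ux (xi V)
        · obtain ⟨N, hN, hsub⟩ := hq3 (xi V) m z hzU
          exact ⟨N, hN, fun B1 h1 B2 h2 => hsub ⟨h1.1, h1.2.2⟩ ⟨h2.1, h2.2.2⟩⟩
        · refine ⟨(closure V)ᶜ, ?_, ?_⟩
          · exact IsOpen.mem_nhds isClosed_closure.isOpen_compl
              (fun hzc => hzU (hVU n V hV.1 hzc))
          · rintro B1 ⟨_, hBV, b, hb1, hb2⟩ B2 _
            exact absurd (subset_closure (hBV hb1)) hb2
      choose! NV hNV hsub using hkey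
      refine ⟨U0 ∩ ⋂ V ∈ {P ∈ vv n | (P ∩ U0).Nonempty}, NV V, ?_, ?_⟩
      · exact Filter.inter_mem (hU0o.mem_nhds hzU0) ((Filter.biInter_mem hAfin).2 hNV)
      · apply Set.Finite.subset (hAfin.biUnion
          (fun V hV => ((hsub V hV).finite :
            {B | B ∈ qb (xi V) m ∧ B ⊆ V ∧ (B ∩ NV V).Nonempty}.Finite)))
        rintro B ⟨⟨V, hVvv, hBq, hBV⟩, hne⟩
        have hVA : V ∈ {P ∈ vv n | (P ∩ U0).Nonempty} := by
          refine ⟨hVvv, ?_⟩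
          obtain ⟨b, hb1, hb2, _⟩ := hne
          exact ⟨b, hBV hb1, hb2⟩
        refine mem_biUnion hVA ⟨hBq, hBV, ?_⟩
        obtain ⟨b, hb1, _, hb3⟩ := hne
        exact ⟨b, hb1, mem_iInter₂.1 hb3 V hVA⟩
    have hlemA := fun n m => stmt10_lemA {B : Set X | ∃ V ∈ vv n, B ∈ qb (xi V) m ∧ B ⊆ V}
      (hWop n m) (hWlf n m)
    choose G hGdisc hGop hGrep using hlemA
    let e := Denumerable.eqv (ℕ × ℕ × ℕ)
    refine ⟨fun i => G (e.symm i).1 (e.symm i).2.1 (e.symm i).2.2, ⟨?_, ?_⟩, ?_⟩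
    · intro P hP
      obtain ⟨i, hi⟩ := mem_iUnion.1 hP
      exact hGop _ _ _ P hi
    · intro O hO hOne
      obtain ⟨z, hzO, hzU⟩ := dense_iff_inter_open.1 hvdense O hO hOne
      obtain ⟨n, hn⟩ := mem_iUnion.1 hzU
      obtain ⟨V, hVvv, hzV⟩ := hn
      have hOV : O ∩ V ⊆ Ux (xi V) :=
        inter_subset_right.trans (subset_closure.trans (hVU n V hVvv))
      obtain ⟨m, B, hB, hBsub⟩ := hq2 (xi V) (O ∩ V) (hO.inter (hvo n V hVvv)) ⟨z, hzO, hzV⟩ hOV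
      have hBW : B ∈ {B : Set X | ∃ V ∈ vv n, B ∈ qb (xi V) m ∧ B ⊆ V} :=
        ⟨V, hVvv, hB, hBsub.trans inter_subset_right⟩
      obtain ⟨k, W', hW', hW'B⟩ := hGrep n m B hBW
      refine ⟨W', mem_iUnion.2 ⟨e (n, m, k), ?_⟩, hW'B.trans (hBsub.trans inter_subset_left)⟩
      simp only [e, Equiv.symm_apply_apply]
      exact hW'
    · intro i; exact hGdisc _ _ _
end

section
/- Every π-metrizable space is almost σ-paracompact. -/
open Set Topology

theorem stmt11 {X : Type*} [TopologicalSpace X] (h : PiMetrizable X) :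
    AlmostSigmaParacompact X := by
  obtain ⟨pb, ⟨hopen_ne, hpi⟩, hdisc⟩ := h
  intro uu huo hcov
  -- choose for each nonempty P some U ∈ uu meeting it
  have key : ∀ P : Set X, ∃ U, P.Nonempty → (U ∈ uu ∧ (P ∩ U).Nonempty) := by
    intro P
    by_cases hP : P.Nonempty
    · obtain ⟨x, hx⟩ := hP
      have hx' : x ∈ ⋃₀ uu := by rw [hcov]; trivial
      obtain ⟨U, hU, hxU⟩ := hx'
      exact ⟨U, fun _ => ⟨hU, ⟨x, hx, hxU⟩⟩⟩
    · exact ⟨∅, fun h' => absurd h' hP⟩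
  choose f hf using key
  have hmem : ∀ n, ∀ P ∈ pb n, IsOpen P ∧ P.Nonempty := fun n P hP =>
    hopen_ne P (mem_iUnion.mpr ⟨n, hP⟩)
  refine ⟨fun n => (fun P => P ∩ f P) '' pb n, ?_, ?_, ?_, ?_⟩
  · rintro n V ⟨P, hP, rfl⟩
    obtain ⟨hPo, hPne⟩ := hmem n P hP
    exact hPo.inter (huo _ (hf P hPne).1)
  · intro n x
    obtain ⟨U, hU, hsub⟩ := hdisc n x
    refine ⟨U, hU, ?_⟩
    have : {V ∈ (fun P => P ∩ f P) '' pb n | (V ∩ U).Nonempty} ⊆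
        (fun P => P ∩ f P) '' {P ∈ pb n | (P ∩ U).Nonempty} := by
      rintro V ⟨⟨P, hP, rfl⟩, hne⟩
      exact ⟨P, ⟨hP, hne.mono (inter_subset_inter_left U inter_subset_left)⟩, rfl⟩
    exact ((hsub.finite.image _).subset this)
  · rintro n V ⟨P, hP, rfl⟩
    obtain ⟨-, hPne⟩ := hmem n P hP
    exact ⟨f P, (hf P hPne).1, inter_subset_right⟩
  · rw [dense_iff_inter_open]
    intro O hO hOne
    obtain ⟨P, hPmem, hPO⟩ := hpi O hO hOne
    obtain ⟨n, hPn⟩ := mem_iUnion.mp hPmem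
    obtain ⟨-, hPne⟩ := hmem n P hPn
    obtain ⟨y, hy⟩ := (hf P hPne).2
    exact ⟨y, hPO hy.1, mem_iUnion.mpr ⟨n, ⟨P ∩ f P, ⟨P, hPn, rfl⟩, hy⟩⟩⟩
end

section
/- A T1 regular space Y is the image of a space with a countable π-base under a closed, at most two-to-one continuous map if and only if Y is separable. -/
open Set Topology

universe u

set_option linter.unusedSectionVars false


variable {Y : Type u} [TopologicalSpace Y]

/-- Alexandroff-duplicate-style topology on `Y ⊕ ↥D`. -/
def dupTop (D : Set Y) : TopologicalSpace (Y ⊕ ↥D) where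
  IsOpen S := ∀ y : Y, Sum.inl y ∈ S → ∃ U : Set Y, IsOpen U ∧ y ∈ U ∧
    (∀ z ∈ U, Sum.inl z ∈ S) ∧ ∀ d : ↥D, (d : Y) ∈ U → (d : Y) ≠ y → Sum.inr d ∈ S
  isOpen_univ := fun y _ => ⟨univ, isOpen_univ, trivial, fun _ _ => trivial, fun _ _ _ => trivial⟩
  isOpen_inter := by
    rintro S T hS hT y ⟨hyS, hyT⟩
    obtain ⟨U, hU, hyU, h1, h2⟩ := hS y hyS
    obtain ⟨V, hV, hyV, h3, h4⟩ := hT y hyT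
    exact ⟨U ∩ V, hU.inter hV, ⟨hyU, hyV⟩, fun z hz => ⟨h1 z hz.1, h3 z hz.2⟩,
      fun d hd hne => ⟨h2 d hd.1 hne, h4 d hd.2 hne⟩⟩
  isOpen_sUnion := by
    intro 𝒮 h y hy
    obtain ⟨S, hS, hyS⟩ := hy
    obtain ⟨U, hU, hyU, h1, h2⟩ := h S hS y hyS
    exact ⟨U, hU, hyU, fun z hz => ⟨S, hS, h1 z hz⟩, fun d hd hne => ⟨S, hS, h2 d hd hne⟩⟩

lemma dup_isOpen_iff (D : Set Y) (S : Set (Y ⊕ ↥D)) :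
    IsOpen[dupTop D] S ↔ ∀ y : Y, Sum.inl y ∈ S → ∃ U : Set Y, IsOpen U ∧ y ∈ U ∧
      (∀ z ∈ U, Sum.inl z ∈ S) ∧ ∀ d : ↥D, (d : Y) ∈ U → (d : Y) ≠ y → Sum.inr d ∈ S :=
  Iff.rfl

/-- basic neighborhood of `inl y`. -/
def Ndup (D : Set Y) (y : Y) (U : Set Y) : Set (Y ⊕ ↥D) :=
  Sum.inl '' U ∪ Sum.inr '' {d : ↥D | (d : Y) ∈ U ∧ (d : Y) ≠ y}

lemma mem_Ndup_inl {D : Set Y} {y z : Y} {U : Set Y} :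
    Sum.inl z ∈ Ndup D y U ↔ z ∈ U := by simp [Ndup]

lemma mem_Ndup_inr {D : Set Y} {y : Y} {d : ↥D} {U : Set Y} :
    Sum.inr d ∈ Ndup D y U ↔ (d : Y) ∈ U ∧ (d : Y) ≠ y := by simp [Ndup]

lemma Ndup_open [T1Space Y] (D : Set Y) (y : Y) {U : Set Y} (hU : IsOpen U) :
    IsOpen[dupTop D] (Ndup D y U) := by
  rw [dup_isOpen_iff]
  intro z hz
  rw [mem_Ndup_inl] at hz
  by_cases hzy : z = y
  · subst hzy
    exact ⟨U, hU, hz, fun w hw => mem_Ndup_inl.2 hw,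
      fun d hd hne => mem_Ndup_inr.2 ⟨hd, hne⟩⟩
  · refine ⟨U \ {y}, hU.sdiff isClosed_singleton, ⟨hz, hzy⟩, ?_, ?_⟩
    · intro w hw; exact mem_Ndup_inl.2 hw.1
    · intro d hd _; exact mem_Ndup_inr.2 ⟨hd.1, hd.2⟩

lemma inr_singleton_open (D : Set Y) (d : ↥D) :
    IsOpen[dupTop D] {Sum.inr d} := by
  rw [dup_isOpen_iff]
  intro y hy
  simp at hy

lemma dup_t1 [T1Space Y] (D : Set Y) : @T1Space _ (dupTop D) := by
  letI := dupTop D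
  refine ⟨fun x => ?_⟩
  rw [← isOpen_compl_iff, dup_isOpen_iff]
  intro y hy
  cases x with
  | inl z =>
    have hzy : z ≠ y := fun h => hy (by simp [h])
    refine ⟨{z}ᶜ, isOpen_compl_singleton, fun h => hzy (h.symm), ?_, ?_⟩
    · intro w hw
      simp only [mem_compl_iff, mem_singleton_iff]
      exact fun h => hw (by simpa using h)
    · intro d _ _
      simp
  | inr e =>
    by_cases hey : (e : Y) = y
    · refine ⟨univ, isOpen_univ, trivial, fun z _ => by simp, ?_⟩
      intro d hd hne
      simp only [mem_compl_iff, mem_singleton_iff, Sum.inr.injEq]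
      intro h
      exact hne (by rw [h, hey])
    · refine ⟨{(e : Y)}ᶜ, isOpen_compl_singleton, fun h => hey h.symm, fun z _ => by simp, ?_⟩
      intro d hd _
      simp only [mem_compl_iff, mem_singleton_iff, Sum.inr.injEq]
      intro h
      exact hd (by rw [h]; exact rfl)

lemma dup_regular [T1Space Y] [RegularSpace Y] (D : Set Y) :
    @RegularSpace _ (dupTop D) := by
  letI := dupTop D
  haveI := dup_t1 D
  refine RegularSpace.of_exists_mem_nhds_isClosed_subset ?_
  intro x S hS
  cases x with
  | inr d =>
    refine ⟨{Sum.inr d}, (inr_singleton_open D d).mem_nhds rfl, isClosed_singleton, ?_⟩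
    simpa using mem_of_mem_nhds hS
  | inl y =>
    obtain ⟨O, hOS, hO, hyO⟩ := mem_nhds_iff.1 hS
    obtain ⟨U, hU, hyU, h1, h2⟩ := (dup_isOpen_iff D O).1 hO y hyO
    obtain ⟨t, htn, htc, htU⟩ := exists_mem_nhds_isClosed_subset (hU.mem_nhds hyU)
    set V := interior t with hV
    have hyV : y ∈ V := mem_interior_iff_mem_nhds.2 htn
    have hclV : closure V ⊆ U := (closure_minimal interior_subset htc).trans htU
    -- the closed neighborhood
    refine ⟨Sum.inl '' closure V ∪
      Sum.inr '' {d : ↥D | (d : Y) ∈ closure V ∧ (d : Y) ≠ y}, ?_, ?_, ?_⟩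
    · -- contains the open set Ndup D y V
      refine Filter.mem_of_superset ((Ndup_open D y isOpen_interior).mem_nhds
        (mem_Ndup_inl.2 hyV)) ?_
      rintro x hx
      cases x with
      | inl z => exact Or.inl ⟨z, subset_closure (mem_Ndup_inl.1 hx), rfl⟩
      | inr e =>
        obtain ⟨he, hne⟩ := mem_Ndup_inr.1 hx
        exact Or.inr ⟨e, ⟨subset_closure he, hne⟩, rfl⟩
    · -- closed
      rw [← isOpen_compl_iff, dup_isOpen_iff]
      intro z hz
      have hzV : z ∉ closure V := by
        intro h
        exact hz (Or.inl ⟨z, h, rfl⟩)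
      refine ⟨(closure V)ᶜ, isClosed_closure.isOpen_compl, hzV, ?_, ?_⟩
      · intro w hw
        rintro (⟨w', hw', hww⟩ | ⟨d, hd, hdw⟩)
        · exact hw (Sum.inl.inj hww ▸ hw')
        · exact Sum.inl_ne_inr hdw.symm
      · intro d hd _
        rintro (⟨w', hw', hww⟩ | ⟨e, he, hed⟩)
        · exact Sum.inl_ne_inr hww
        · rw [Sum.inr.injEq] at hed
          exact hd (hed ▸ he.1)
    · -- subset of S
      rintro x (⟨z, hz, rfl⟩ | ⟨d, hd, rfl⟩)
      · exact hOS (h1 z (hclV hz))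
      · exact hOS (h2 d (hclV hd.1) hd.2)

theorem stmt14_bwd {Y : Type u} [TopologicalSpace Y] [T1Space Y] [RegularSpace Y]
    (hsep : TopologicalSpace.SeparableSpace Y) :
    ∃ (X : Type u) (_ : TopologicalSpace X) (_ : T1Space X)
      (_ : RegularSpace X) (f : X → Y),
        Continuous f ∧ Function.Surjective f ∧ IsClosedMap f ∧
        (∀ y : Y, (f ⁻¹' {y}).encard ≤ 2) ∧
        ∃ pb : Set (Set X), pb.Countable ∧ IsPiBase X pb := by
  obtain ⟨D, hDc, hDd⟩ := hsep.exists_countable_dense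
  letI tX := dupTop D
  refine ⟨Y ⊕ ↥D, tX, dup_t1 D, dup_regular D, Sum.elim id Subtype.val, ?_, ?_, ?_, ?_, ?_⟩
  · -- continuous
    rw [continuous_def]
    intro U hU
    rw [dup_isOpen_iff]
    intro y hy
    exact ⟨U, hU, hy, fun z hz => hz, fun d hd _ => hd⟩
  · exact fun y => ⟨Sum.inl y, rfl⟩
  · -- closed map
    intro C hC
    rw [← isOpen_compl_iff] at hC ⊢
    rw [isOpen_iff_forall_mem_open]
    intro y hy
    have hinl : Sum.inl y ∈ Cᶜ := fun h => hy ⟨Sum.inl y, h, rfl⟩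
    obtain ⟨U, hU, hyU, h1, h2⟩ := (dup_isOpen_iff D Cᶜ).1 hC y hinl
    refine ⟨U, ?_, hU, hyU⟩
    intro z hz
    rintro ⟨x, hxC, hfx⟩
    cases x with
    | inl w =>
      simp only [Sum.elim_inl, id] at hfx
      exact h1 z hz (by rwa [hfx] at hxC)
    | inr d =>
      simp only [Sum.elim_inr] at hfx
      by_cases hdy : (d : Y) = y
      · exact hy ⟨Sum.inr d, hxC, hdy⟩
      · exact h2 d (by rwa [hfx]) hdy hxC
  · -- fibers
    intro y
    by_cases hyD : y ∈ D
    · refine le_trans (Set.encard_le_encard (s := _) (t := {Sum.inl y, Sum.inr ⟨y, hyD⟩}) ?_) ?_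
      · rintro x hx
        cases x with
        | inl z => simp only [mem_preimage, Sum.elim_inl, id, mem_singleton_iff] at hx
                   exact Or.inl (by rw [hx])
        | inr d => simp only [mem_preimage, Sum.elim_inr, mem_singleton_iff] at hx
                   have hde : d = ⟨y, hyD⟩ := Subtype.ext hx
                   exact Or.inr (by simp [hde])
      · rw [Set.encard_pair (by simp)]
    · refine le_trans (Set.encard_le_encard (s := _) (t := {Sum.inl y}) ?_) ?_
      · rintro x hx
        cases x with
        | inl z => simp only [mem_preimage, Sum.elim_inl, id, mem_singleton_iff] at hx
                   simp [hx]
        | inr d => simp only [mem_preimage, Sum.elim_inr, mem_singleton_iff] at hx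
                   exact absurd (hx ▸ d.2) hyD
      · simp
  · -- countable π-base
    haveI : Countable ↥D := hDc.to_subtype
    refine ⟨(fun d : ↥D => ({Sum.inr d} : Set (Y ⊕ ↥D))) '' univ ∪
      (fun d : ↥D => ({Sum.inl (d : Y)} : Set (Y ⊕ ↥D))) '' {d | IsOpen {(d : Y)}}, ?_, ?_, ?_⟩
    · exact ((countable_univ).image _).union ((to_countable _).image _)
    · rintro P (⟨d, -, rfl⟩ | ⟨d, hd, rfl⟩)
      · exact ⟨inr_singleton_open D d, ⟨_, rfl⟩⟩
      · refine ⟨?_, ⟨_, rfl⟩⟩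
        rw [dup_isOpen_iff]
        intro z hz
        rw [mem_singleton_iff, Sum.inl.injEq] at hz
        subst hz
        exact ⟨({(d : Y)} : Set Y), hd, rfl, fun w hw => by simpa using hw,
          fun e he hne => absurd he hne⟩
    · intro O hO ⟨x, hx⟩
      by_cases hinr : ∃ d : ↥D, Sum.inr d ∈ O
      · obtain ⟨d, hd⟩ := hinr
        exact ⟨{Sum.inr d}, Or.inl ⟨d, trivial, rfl⟩, by simpa using hd⟩
      · push_neg at hinr
        -- x must be inl
        obtain ⟨y, rfl⟩ : ∃ y, x = Sum.inl y := by
          cases x with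
          | inl y => exact ⟨y, rfl⟩
          | inr d => exact absurd hx (hinr d)
        obtain ⟨U, hU, hyU, h1, h2⟩ := (dup_isOpen_iff D O).1 hO y hx
        -- U ∖ {y} does not meet D, hence U = {y}
        have hU' : U \ {y} = ∅ := by
          by_contra h
          obtain ⟨z, hz⟩ := nonempty_iff_ne_empty.2 h
          obtain ⟨w, hwD, hwU⟩ := hDd.exists_mem_open (hU.sdiff isClosed_singleton) ⟨z, hz⟩
          exact hinr ⟨w, hwD⟩ (h2 ⟨w, hwD⟩ hwU.1 hwU.2)
        have hUy : U = {y} := by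
          apply Subset.antisymm
          · intro z hz
            by_contra hzy
            exact absurd (mem_diff_of_mem hz hzy) (by rw [hU']; exact notMem_empty z)
          · intro z hz; rw [mem_singleton_iff] at hz; exact hz ▸ hyU
        have hyD : y ∈ D := by
          obtain ⟨w, hwD, hwU⟩ := hDd.exists_mem_open hU ⟨y, hyU⟩
          rw [hUy, mem_singleton_iff] at hwU
          exact hwU ▸ hwD
        refine ⟨{Sum.inl y}, Or.inr ⟨⟨y, hyD⟩, show IsOpen {((⟨y, hyD⟩ : ↥D) : Y)} from hUy ▸ hU, rfl⟩, ?_⟩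
        intro w hw
        rw [mem_singleton_iff] at hw
        exact hw ▸ hx

theorem stmt14_fwd {Y : Type u} [TopologicalSpace Y]
    (h : ∃ (X : Type u) (_ : TopologicalSpace X) (_ : T1Space X)
      (_ : RegularSpace X) (f : X → Y),
        Continuous f ∧ Function.Surjective f ∧ IsClosedMap f ∧
        (∀ y : Y, (f ⁻¹' {y}).encard ≤ 2) ∧
        ∃ pb : Set (Set X), pb.Countable ∧ IsPiBase X pb) :
    TopologicalSpace.SeparableSpace Y := by
  obtain ⟨X, tX, _, _, f, hf, hsurj, -, -, pb, hcnt, hpb⟩ := h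
  haveI : Countable ↥pb := hcnt.to_subtype
  set g : ↥pb → X := fun P => ((hpb.1 P.1 P.2).2).choose with hg
  refine ⟨⟨f '' Set.range g, (Set.countable_range g).image f, ?_⟩⟩
  rw [dense_iff_inter_open]
  rintro V hV ⟨y, hy⟩
  obtain ⟨x, rfl⟩ := hsurj y
  have hpre : IsOpen (f ⁻¹' V) := hV.preimage hf
  obtain ⟨P, hP, hPV⟩ := hpb.2 _ hpre ⟨x, hy⟩
  exact ⟨f (g ⟨P, hP⟩), hPV ((hpb.1 P hP).2.choose_spec),
    ⟨g ⟨P, hP⟩, ⟨⟨P, hP⟩, rfl⟩, rfl⟩⟩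

theorem stmt14 {Y : Type u} [TopologicalSpace Y] [T1Space Y] [RegularSpace Y] :
    (∃ (X : Type u) (_ : TopologicalSpace X) (_ : T1Space X)
      (_ : RegularSpace X) (f : X → Y),
        Continuous f ∧ Function.Surjective f ∧ IsClosedMap f ∧
        (∀ y : Y, (f ⁻¹' {y}).encard ≤ 2) ∧
        ∃ pb : Set (Set X), pb.Countable ∧ IsPiBase X pb) ↔
    TopologicalSpace.SeparableSpace Y := by
  exact ⟨stmt14_fwd, stmt14_bwd⟩
end

section
/- If a space X has a strong π-base, then every point of X has a countable strong π-base at that point. -/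
open Set Topology

theorem stmt15 {X : Type*} [TopologicalSpace X] (pb : X → Set (Set X))
    (h : ∀ x, StrongPiBaseAt (pb x) x) (x : X) :
    ∃ qb : Set (Set X), qb.Countable ∧ StrongPiBaseAt qb x := by
  obtain ⟨h1, h2, h3⟩ := h x
  by_cases hfin : (pb x).Finite
  · exact ⟨pb x, hfin.countable, h1, h2, h3⟩
  · have hinf : (pb x).Infinite := hfin
    set f := hinf.natEmbedding with hf
    set qb : Set (Set X) := Set.range (fun n => (f n : Set X)) with hqb
    have hsub : qb ⊆ pb x := by rintro P ⟨n, rfl⟩; exact (f n).2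
    have hcnt : qb.Countable := Set.countable_range _
    have hqinf : qb.Infinite := Set.infinite_range_of_injective
      (fun a b hab => f.injective (Subtype.ext hab))
    refine ⟨qb, hcnt, fun P hP => h1 P (hsub hP), ?_, ?_⟩
    · intro U hU hxU
      have hfin2 := h3 U hU hxU
      have : ∃ P ∈ qb, ¬ ¬ P ⊆ U := by
        by_contra hc
        push_neg at hc
        exact hqinf (hfin2.subset (fun P hP => ⟨hsub hP, hc P hP⟩))
      obtain ⟨P, hPq, hPU⟩ := this
      exact ⟨P, hPq, not_not.mp hPU⟩
    · intro U hU hxU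
      exact (h3 U hU hxU).subset (fun P hP => ⟨hsub hP.1, hP.2⟩)
end
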